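/- arXiv:1908.03120 — 6 statements merged into one kernel-verified Lean document; each statement's English description precedes it below -/
import Mathlib

section
/- Let γ ∈ (1,5/3], θ = (γ-1)/2, K > 0 and M ≥ L ≥ 1 + K. Let x ∈ [0,1], ρ ≥ 0 and v ∈ ℝ satisfy v + ρ^θ/θ = M + Kx and v − ρ^θ/θ ≥ L − Kx, and let F ∈ ℝ with |F| ≤ K. Then F − K·(v + ρ^θ) ≤ 0; i.e., on the upper boundary w = M + Kx of the invariant region, the source term of the transport equation for w̃ = w − Kx is nonpositive. -/
/-! The velocity is the mean of the two Riemann invariants, so in the invariant region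
`v ≥ (L + M) / 2 ≥ L ≥ 1`; as `ρ ^ θ ≥ 0`, also `λ₂ = v + ρ ^ θ ≥ 1`, whence `K λ₂ ≥ K ≥ |F|`. -/

lemma add_div_two_le_of_add_eq_of_le_sub {v a w z : ℝ} (hw : v + a = w) (hz : z ≤ v - a) :
    (z + w) / 2 ≤ v := by
  linarith

lemma sub_mul_nonpos_of_abs_le_of_one_le {F K c : ℝ} (hF : |F| ≤ K) (hc : 1 ≤ c) :
    F - K * c ≤ 0 := by
  have hK : 0 ≤ K := (abs_nonneg F).trans hF
  rw [sub_nonpos]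
  calc F ≤ K := (abs_le.mp hF).2
    _ = K * 1 := (mul_one K).symm
    _ ≤ K * c := mul_le_mul_of_nonneg_left hc hK

theorem stmt_5_general (θ K L M x ρ v F : ℝ) (hLM : L ≤ M) (hL : 1 + K ≤ L) (hρ : 0 ≤ ρ)
    (hw : v + ρ ^ θ / θ = M + K * x) (hz : L - K * x ≤ v - ρ ^ θ / θ)
    (hF : |F| ≤ K) :
    F - K * (v + ρ ^ θ) ≤ 0 := by
  have hv : L ≤ v := le_trans (by linarith) (add_div_two_le_of_add_eq_of_le_sub hw hz)
  have hK : 0 ≤ K := (abs_nonneg F).trans hF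
  refine sub_mul_nonpos_of_abs_le_of_one_le hF ?_
  linarith [Real.rpow_nonneg hρ θ]

/-- On the upper boundary `w = M + Kx` of the invariant region,
the source term `F − K·λ₂` of the transport equation for `w̃ = w − Kx` is
nonpositive. -/
theorem stmt_5 (γ θ K L M x ρ v F : ℝ) (hγ1 : 1 < γ) (hγ2 : γ ≤ 5 / 3)
    (hθ : θ = (γ - 1) / 2) (hK : 0 < K) (hLM : L ≤ M) (hL : 1 + K ≤ L)
    (hx : x ∈ Set.Icc (0 : ℝ) 1) (hρ : 0 ≤ ρ)
    (hw : v + ρ ^ θ / θ = M + K * x) (hz : L - K * x ≤ v - ρ ^ θ / θ)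
    (hF : |F| ≤ K) :
    F - K * (v + ρ ^ θ) ≤ 0 :=
  stmt_5_general θ K L M x ρ v F hLM hL hρ hw hz hF
end

section
/- Let θ > 0 and let B₋ ≤ B₊ be real numbers. The set Σ(B₊,B₋) = { (ρ, m) ∈ ℝ² : ρ ≥ 0 and B₋·ρ + ρ^{1+θ}/θ ≤ m ≤ B₊·ρ − ρ^{1+θ}/θ } is a closed convex subset of ℝ². -/
/-! Over the closed half-line `ρ ≥ 0`, `Σ(B₊,B₋)` lies between the graph of the convex function
`ρ ↦ B₋ρ + ρ^{1+θ}/θ` and that of the concave function `ρ ↦ B₊ρ − ρ^{1+θ}/θ`, so it is the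
intersection of an epigraph and a hypograph of continuous functions. -/

open Set

section Between

variable {𝕜 E β : Type*} [Semiring 𝕜] [PartialOrder 𝕜] [AddCommMonoid E] [SMul 𝕜 E]
  [AddCommMonoid β] [PartialOrder β] [IsOrderedAddMonoid β] [Module 𝕜 β] [PosSMulMono 𝕜 β]

theorem convex_setOf_mem_and_le_and_le {s : Set E} {g h : E → β}
    (hg : ConvexOn 𝕜 s g) (hh : ConcaveOn 𝕜 s h) :
    Convex 𝕜 {p : E × β | p.1 ∈ s ∧ g p.1 ≤ p.2 ∧ p.2 ≤ h p.1} := by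
  convert hg.convex_epigraph.inter hh.convex_hypograph using 1
  ext p
  simp only [mem_ofPred_eq, mem_inter_iff]
  tauto

end Between

theorem isClosed_setOf_mem_and_le_and_le {X β : Type*} [TopologicalSpace X] [TopologicalSpace β]
    [Preorder β] [OrderClosedTopology β] {s : Set X} {g h : X → β}
    (hs : IsClosed s) (hg : Continuous g) (hh : Continuous h) :
    IsClosed {p : X × β | p.1 ∈ s ∧ g p.1 ≤ p.2 ∧ p.2 ≤ h p.1} :=
  (hs.preimage continuous_fst).inter
    ((isClosed_le (hg.comp continuous_fst) continuous_snd).inter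
      (isClosed_le continuous_snd (hh.comp continuous_fst)))

theorem stmt_7_general (θ Blo Bhi : ℝ) (hθ : 0 < θ) :
    IsClosed {p : ℝ × ℝ | 0 ≤ p.1 ∧
        Blo * p.1 + p.1 ^ (1 + θ) / θ ≤ p.2 ∧ p.2 ≤ Bhi * p.1 - p.1 ^ (1 + θ) / θ}
    ∧ Convex ℝ {p : ℝ × ℝ | 0 ≤ p.1 ∧
        Blo * p.1 + p.1 ^ (1 + θ) / θ ≤ p.2 ∧ p.2 ≤ Bhi * p.1 - p.1 ^ (1 + θ) / θ} := by
  have hf_convex : ConvexOn ℝ (Ici 0) fun ρ : ℝ => ρ ^ (1 + θ) / θ := by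
    simpa only [smul_eq_mul, div_eq_inv_mul] using
      (convexOn_rpow (by linarith : (1 : ℝ) ≤ 1 + θ)).smul (inv_nonneg.mpr hθ.le)
  have hf_cont : Continuous fun ρ : ℝ => ρ ^ (1 + θ) / θ :=
    (continuous_id.rpow_const fun _ => Or.inr (by linarith)).div_const θ
  exact ⟨isClosed_setOf_mem_and_le_and_le isClosed_Ici
      ((continuous_const_mul Blo).add hf_cont) ((continuous_const_mul Bhi).sub hf_cont),
    convex_setOf_mem_and_le_and_le
      (((LinearMap.mulLeft ℝ Blo).convexOn (convex_Ici 0)).add hf_convex)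
      (((LinearMap.mulLeft ℝ Bhi).concaveOn (convex_Ici 0)).sub hf_convex)⟩

/-- For `θ > 0` and `Blo ≤ Bhi`, the invariant region
`Σ(Bhi,Blo) = {(ρ,m) : ρ ≥ 0, Bloρ + ρ^{1+θ}/θ ≤ m ≤ Bhiρ − ρ^{1+θ}/θ}`
is a closed convex subset of `ℝ²`. -/
theorem stmt_7 (θ Blo Bhi : ℝ) (hθ : 0 < θ) (hB : Blo ≤ Bhi) :
    IsClosed {p : ℝ × ℝ | 0 ≤ p.1 ∧
        Blo * p.1 + p.1 ^ (1 + θ) / θ ≤ p.2 ∧ p.2 ≤ Bhi * p.1 - p.1 ^ (1 + θ) / θ}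
    ∧ Convex ℝ {p : ℝ × ℝ | 0 ≤ p.1 ∧
        Blo * p.1 + p.1 ^ (1 + θ) / θ ≤ p.2 ∧ p.2 ≤ Bhi * p.1 - p.1 ^ (1 + θ) / θ} :=
  stmt_7_general θ Blo Bhi hθ
end

section
/- Let θ > 0, B₋ ≤ B₊, and a < b. If (ρ, m) : [a,b] → ℝ² is integrable and (ρ(x), m(x)) ∈ Σ(B₊,B₋) for almost every x ∈ [a,b], then the average ( (1/(b−a))·∫_a^b ρ(x) dx , (1/(b−a))·∫_a^b m(x) dx ) also belongs to Σ(B₊,B₋). -/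
open MeasureTheory Set

set_option maxHeartbeats 800000

lemma sigma_convex (θ Blo Bhi : ℝ) (hθ : 0 < θ) :
    Convex ℝ {p : ℝ × ℝ | 0 ≤ p.1 ∧ Blo * p.1 + p.1 ^ (1 + θ) / θ ≤ p.2
      ∧ p.2 ≤ Bhi * p.1 - p.1 ^ (1 + θ) / θ} := by
  have hcv : ConvexOn ℝ (Ici 0) fun x : ℝ ↦ x ^ (1 + θ) :=
    convexOn_rpow (by linarith)
  rintro ⟨x1, y1⟩ ⟨hx1, hl1, hr1⟩ ⟨x2, y2⟩ ⟨hx2, hl2, hr2⟩ s t hs ht hst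
  have key : (s * x1 + t * x2) ^ (1 + θ) ≤ s * x1 ^ (1 + θ) + t * x2 ^ (1 + θ) := by
    have := hcv.2 hx1 hx2 hs ht hst
    simpa [smul_eq_mul] using this
  have hx : 0 ≤ s * x1 + t * x2 := by positivity
  refine ⟨hx, ?_, ?_⟩ <;> simp only [Prod.smul_mk, Prod.mk_add_mk, smul_eq_mul]
  · have h1 : s * (Blo * x1 + x1 ^ (1 + θ) / θ) ≤ s * y1 := by nlinarith
    have h2 : t * (Blo * x2 + x2 ^ (1 + θ) / θ) ≤ t * y2 := by nlinarith
    have : (s * x1 + t * x2) ^ (1 + θ) / θ ≤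
        s * (x1 ^ (1 + θ) / θ) + t * (x2 ^ (1 + θ) / θ) := by
      rw [div_le_iff₀ hθ]
      field_simp
      nlinarith
    nlinarith
  · have h1 : s * y1 ≤ s * (Bhi * x1 - x1 ^ (1 + θ) / θ) := by nlinarith
    have h2 : t * y2 ≤ t * (Bhi * x2 - x2 ^ (1 + θ) / θ) := by nlinarith
    have : (s * x1 + t * x2) ^ (1 + θ) / θ ≤
        s * (x1 ^ (1 + θ) / θ) + t * (x2 ^ (1 + θ) / θ) := by
      rw [div_le_iff₀ hθ]
      field_simp
      nlinarith
    nlinarith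

lemma sigma_closed (θ Blo Bhi : ℝ) (hθ : 0 < θ) :
    IsClosed {p : ℝ × ℝ | 0 ≤ p.1 ∧ Blo * p.1 + p.1 ^ (1 + θ) / θ ≤ p.2
      ∧ p.2 ≤ Bhi * p.1 - p.1 ^ (1 + θ) / θ} := by
  have hc : Continuous fun p : ℝ × ℝ => p.1 ^ (1 + θ) :=
    (Real.continuous_rpow_const (by linarith)).comp continuous_fst
  refine IsClosed.inter (isClosed_le continuous_const continuous_fst) ?_
  exact IsClosed.inter
    (isClosed_le (by continuity) continuous_snd)
    (isClosed_le continuous_snd (by continuity))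

/-- The invariant region `Σ(Bhi,Blo)` is stable under averaging: if
`(ρ(x), m(x)) ∈ Σ(Bhi,Blo)` for a.e. `x ∈ [a,b]` and `(ρ,m)` is integrable, then
the average over `[a,b]` also lies in `Σ(Bhi,Blo)`. -/
theorem stmt_8 (θ Blo Bhi a b : ℝ) (hθ : 0 < θ) (hB : Blo ≤ Bhi) (hab : a < b)
    (ρ m : ℝ → ℝ)
    (hρint : IntegrableOn ρ (Icc a b)) (hmint : IntegrableOn m (Icc a b))
    (hmem : ∀ᵐ x ∂(volume.restrict (Icc a b)),
      0 ≤ ρ x ∧ Blo * ρ x + ρ x ^ (1 + θ) / θ ≤ m x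
        ∧ m x ≤ Bhi * ρ x - ρ x ^ (1 + θ) / θ) :
    0 ≤ (b - a)⁻¹ * ∫ x in a..b, ρ x
    ∧ Blo * ((b - a)⁻¹ * ∫ x in a..b, ρ x)
        + ((b - a)⁻¹ * ∫ x in a..b, ρ x) ^ (1 + θ) / θ
      ≤ (b - a)⁻¹ * ∫ x in a..b, m x
    ∧ (b - a)⁻¹ * ∫ x in a..b, m x
      ≤ Bhi * ((b - a)⁻¹ * ∫ x in a..b, ρ x)
        - ((b - a)⁻¹ * ∫ x in a..b, ρ x) ^ (1 + θ) / θ := by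
  set S := {p : ℝ × ℝ | 0 ≤ p.1 ∧ Blo * p.1 + p.1 ^ (1 + θ) / θ ≤ p.2
      ∧ p.2 ≤ Bhi * p.1 - p.1 ^ (1 + θ) / θ} with hS
  have hfi : IntegrableOn (fun x => (ρ x, m x)) (Icc a b) :=
    hρint.prodMk hmint
  have h0 : volume (Icc a b) ≠ 0 := by
    simp [Real.volume_Icc, hab.le]
    linarith
  have hT : volume (Icc a b) ≠ ⊤ := by simp [Real.volume_Icc]
  have hmem' : ∀ᵐ x ∂(volume.restrict (Icc a b)), (ρ x, m x) ∈ S := by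
    filter_upwards [hmem] with x hx
    exact hx
  have havg := (sigma_convex θ Blo Bhi hθ).set_average_mem
    (sigma_closed θ Blo Bhi hθ) h0 hT hmem' hfi
  have havg_eq : (⨍ x in Icc a b, (ρ x, m x)) =
      ((b - a)⁻¹ * ∫ x in a..b, ρ x, (b - a)⁻¹ * ∫ x in a..b, m x) := by
    rw [average_eq, integral_pair hρint hmint]
    rw [measureReal_restrict_apply_univ, measureReal_def, Real.volume_Icc, ENNReal.toReal_ofReal (by linarith)]
    rw [intervalIntegral.integral_of_le hab.le, intervalIntegral.integral_of_le hab.le,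
      ← integral_Icc_eq_integral_Ioc, ← integral_Icc_eq_integral_Ioc]
    simp [Prod.smul_mk, smul_eq_mul]
  rw [havg_eq] at havg
  exact havg
end

section
/- Let γ ∈ (1,5/3], θ = (γ-1)/2, p(ρ) = ρ^γ/γ, and C > 1. There exists a constant A > 0, depending only on γ and C, with the following property: for all ρ₀ > 0 and ρ > 0 with 1/C ≤ ρ/ρ₀ ≤ C, ρ ≠ ρ₀, and all v₀ ∈ ℝ, if v = v₀ − sqrt( (p(ρ) − p(ρ₀)) / (ρ·ρ₀·(ρ − ρ₀)) )·(ρ − ρ₀) (the state on the 1-shock curve S₁ through (ρ₀,v₀)), then | (v + ρ^θ/θ) − (v₀ + ρ₀^θ/θ) | ≤ A·ρ₀^{(γ−7)/2}·|ρ − ρ₀|³. In particular, the 1-shock curve and the 1-rarefaction curve w = const have a tangency of second order at (ρ₀,v₀). -/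
open Real Set

lemma chain_step (f f' : ℝ → ℝ) (lo hi K : ℝ) (n : ℕ) (hK : 0 ≤ K)
    (hlo1 : lo ≤ 1) (h1hi : 1 ≤ hi)
    (hd : ∀ x ∈ Set.Icc lo hi, HasDerivAt f (f' x) x)
    (hf1 : f 1 = 0)
    (hb : ∀ x ∈ Set.Icc lo hi, |f' x| ≤ K * |x - 1| ^ n) :
    ∀ x ∈ Set.Icc lo hi, |f x| ≤ K * |x - 1| ^ (n + 1) := by
  intro x hx
  rcases lt_trichotomy x 1 with hx1 | hx1 | hx1
  · have hsub : Set.Icc x 1 ⊆ Set.Icc lo hi := Set.Icc_subset_Icc hx.1 h1hi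
    obtain ⟨c, hc, hceq⟩ := exists_hasDerivAt_eq_slope f f' hx1
      (fun y hy => (hd y (hsub hy)).continuousAt.continuousWithinAt)
      (fun y hy => hd y (hsub (Set.Ioo_subset_Icc_self hy)))
    have hcmem : c ∈ Set.Icc lo hi := hsub (Set.Ioo_subset_Icc_self hc)
    have hfx : f x = f' c * (x - 1) := by
      have h1x : (1 : ℝ) - x ≠ 0 := by linarith [hc.1, hc.2]
      field_simp [hf1] at hceq
      nlinarith [hceq]
    rw [hfx, abs_mul]
    have h1 : |f' c| ≤ K * |c - 1| ^ n := hb c hcmem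
    have h2 : |c - 1| ≤ |x - 1| := by
      rw [abs_of_neg (by linarith [hc.2] : c - 1 < 0), abs_of_neg (by linarith : x - 1 < 0)]
      linarith [hc.1]
    calc |f' c| * |x - 1| ≤ (K * |x - 1| ^ n) * |x - 1| := by
          apply mul_le_mul_of_nonneg_right _ (abs_nonneg _)
          exact h1.trans (mul_le_mul_of_nonneg_left (pow_le_pow_left₀ (abs_nonneg _) h2 n) hK)
      _ = K * |x - 1| ^ (n + 1) := by ring
  · simp [hx1, hf1]
  · have hsub : Set.Icc 1 x ⊆ Set.Icc lo hi := Set.Icc_subset_Icc hlo1 hx.2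
    obtain ⟨c, hc, hceq⟩ := exists_hasDerivAt_eq_slope f f' hx1
      (fun y hy => (hd y (hsub hy)).continuousAt.continuousWithinAt)
      (fun y hy => hd y (hsub (Set.Ioo_subset_Icc_self hy)))
    have hcmem : c ∈ Set.Icc lo hi := hsub (Set.Ioo_subset_Icc_self hc)
    have hfx : f x = f' c * (x - 1) := by
      have h1x : x - 1 ≠ 0 := by linarith [hc.1, hc.2]
      field_simp [hf1] at hceq
      nlinarith [hceq]
    rw [hfx, abs_mul]
    have h1 : |f' c| ≤ K * |c - 1| ^ n := hb c hcmem
    have h2 : |c - 1| ≤ |x - 1| := by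
      rw [abs_of_pos (by linarith [hc.1] : (0:ℝ) < c - 1), abs_of_pos (by linarith : (0:ℝ) < x - 1)]
      linarith [hc.2]
    calc |f' c| * |x - 1| ≤ (K * |x - 1| ^ n) * |x - 1| := by
          apply mul_le_mul_of_nonneg_right _ (abs_nonneg _)
          exact h1.trans (mul_le_mul_of_nonneg_left (pow_le_pow_left₀ (abs_nonneg _) h2 n) hK)
      _ = K * |x - 1| ^ (n + 1) := by ring

noncomputable def M0 (θ x : ℝ) : ℝ :=
  -θ^2 * x ^ (2*θ+2) + (θ+1)^2 * x ^ (2*θ+1) - 2*(2*θ+1) * x ^ (θ+1) + (θ+1)^2 * x - θ^2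
noncomputable def M1 (θ x : ℝ) : ℝ :=
  -θ^2*(2*θ+2) * x ^ (2*θ+1) + (θ+1)^2*(2*θ+1) * x ^ (2*θ) - 2*(2*θ+1)*(θ+1) * x ^ θ + (θ+1)^2
noncomputable def M2 (θ x : ℝ) : ℝ :=
  -θ^2*(2*θ+2)*(2*θ+1) * x ^ (2*θ) + (θ+1)^2*(2*θ+1)*(2*θ) * x ^ (2*θ-1)
    - 2*(2*θ+1)*(θ+1)*θ * x ^ (θ-1)
noncomputable def M3 (θ x : ℝ) : ℝ :=
  -θ^2*(2*θ+2)*(2*θ+1)*(2*θ) * x ^ (2*θ-1) + (θ+1)^2*(2*θ+1)*(2*θ)*(2*θ-1) * x ^ (2*θ-2)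
    - 2*(2*θ+1)*(θ+1)*θ*(θ-1) * x ^ (θ-2)
noncomputable def M4 (θ x : ℝ) : ℝ :=
  -θ^2*(2*θ+2)*(2*θ+1)*(2*θ)*(2*θ-1) * x ^ (2*θ-2)
    + (θ+1)^2*(2*θ+1)*(2*θ)*(2*θ-1)*(2*θ-2) * x ^ (2*θ-3)
    - 2*(2*θ+1)*(θ+1)*θ*(θ-1)*(θ-2) * x ^ (θ-3)

lemma rpow_hda {x : ℝ} (hx : 0 < x) (p q : ℝ) (hpq : p - 1 = q) :
    HasDerivAt (fun y : ℝ => y ^ p) (p * x ^ q) x := by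
  have := Real.hasDerivAt_rpow_const (x := x) (p := p) (Or.inl hx.ne')
  rwa [hpq] at this

lemma hdM0 (θ : ℝ) {x : ℝ} (hx : 0 < x) : HasDerivAt (M0 θ) (M1 θ x) x := by
  have h1 := rpow_hda hx (2*θ+2) (2*θ+1) (by ring)
  have h2 := rpow_hda hx (2*θ+1) (2*θ) (by ring)
  have h3 := rpow_hda hx (θ+1) θ (by ring)
  have h := ((((h1.const_mul (-θ^2)).add (h2.const_mul ((θ+1)^2))).sub
      (h3.const_mul (2*(2*θ+1)))).add ((hasDerivAt_id x).const_mul ((θ+1)^2))).sub_const (θ^2)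
  refine h.congr_deriv ?_
  unfold M1; ring

lemma hdM1 (θ : ℝ) {x : ℝ} (hx : 0 < x) : HasDerivAt (M1 θ) (M2 θ x) x := by
  have h1 := rpow_hda hx (2*θ+1) (2*θ) (by ring)
  have h2 := rpow_hda hx (2*θ) (2*θ-1) (by ring)
  have h3 := rpow_hda hx θ (θ-1) (by ring)
  have h := (((h1.const_mul (-θ^2*(2*θ+2))).add (h2.const_mul ((θ+1)^2*(2*θ+1)))).sub
      (h3.const_mul (2*(2*θ+1)*(θ+1)))).add_const ((θ+1)^2)
  refine h.congr_deriv ?_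
  unfold M2; ring

lemma hdM2 (θ : ℝ) {x : ℝ} (hx : 0 < x) : HasDerivAt (M2 θ) (M3 θ x) x := by
  have h1 := rpow_hda hx (2*θ) (2*θ-1) (by ring)
  have h2 := rpow_hda hx (2*θ-1) (2*θ-2) (by ring)
  have h3 := rpow_hda hx (θ-1) (θ-2) (by ring)
  have h := ((h1.const_mul (-θ^2*(2*θ+2)*(2*θ+1))).add (h2.const_mul ((θ+1)^2*(2*θ+1)*(2*θ)))).sub
      (h3.const_mul (2*(2*θ+1)*(θ+1)*θ))
  refine h.congr_deriv ?_
  unfold M3; ring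

lemma hdM3 (θ : ℝ) {x : ℝ} (hx : 0 < x) : HasDerivAt (M3 θ) (M4 θ x) x := by
  have h1 := rpow_hda hx (2*θ-1) (2*θ-2) (by ring)
  have h2 := rpow_hda hx (2*θ-2) (2*θ-3) (by ring)
  have h3 := rpow_hda hx (θ-2) (θ-3) (by ring)
  have h := ((h1.const_mul (-θ^2*(2*θ+2)*(2*θ+1)*(2*θ))).add
      (h2.const_mul ((θ+1)^2*(2*θ+1)*(2*θ)*(2*θ-1)))).sub
      (h3.const_mul (2*(2*θ+1)*(θ+1)*θ*(θ-1)))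
  refine h.congr_deriv ?_
  unfold M4; ring

lemma M0_one (θ : ℝ) : M0 θ 1 = 0 := by simp [M0]; ring
lemma M1_one (θ : ℝ) : M1 θ 1 = 0 := by simp [M1]; ring
lemma M2_one (θ : ℝ) : M2 θ 1 = 0 := by simp [M2]; ring
lemma M3_one (θ : ℝ) : M3 θ 1 = 0 := by simp [M3]; ring

lemma abs_prod_le {a b A B : ℝ} (ha : |a| ≤ A) (hb : |b| ≤ B) : |a*b| ≤ A*B := by
  rw [abs_mul]
  exact mul_le_mul ha hb (abs_nonneg b) (le_trans (abs_nonneg a) ha)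

lemma rpow_bound {C x a : ℝ} (hC : 1 < C) (hx : 1/C ≤ x) (ha1 : -3 ≤ a) (ha2 : a ≤ 0) :
    x ^ a ≤ C ^ (3:ℕ) := by
  have hC0 : (0:ℝ) < C := by linarith
  have hiC : (0:ℝ) < 1/C := by positivity
  have h1 : x ^ a ≤ (1/C) ^ a := Real.rpow_le_rpow_of_nonpos hiC hx ha2
  have h2 : (1/C) ^ a = C ^ (-a) := by
    rw [one_div, Real.inv_rpow hC0.le, ← Real.rpow_neg hC0.le]
  have h3 : C ^ (-a) ≤ C ^ ((3:ℕ):ℝ) := Real.rpow_le_rpow_of_exponent_le hC.le (by push_cast; linarith)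
  rw [Real.rpow_natCast] at h3
  linarith [h1, h2 ▸ h1]

lemma abs_rpow_term {c x a K D : ℝ} (hx : 0 < x) (hc : |c| ≤ K) (hxa : x ^ a ≤ D) (hK : 0 ≤ K) :
    |c * x ^ a| ≤ K * D := by
  rw [abs_mul, abs_of_pos (Real.rpow_pos_of_pos hx a)]
  exact mul_le_mul hc hxa (Real.rpow_pos_of_pos hx a).le hK

lemma M4_bound (θ C : ℝ) (hθ0 : 0 < θ) (hθ3 : θ ≤ 1/3) (hC : 1 < C) :
    ∀ x ∈ Set.Icc (1/C) C, |M4 θ x| ≤ 729 * C ^ (3:ℕ) * |x - 1| ^ 0 := by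
  intro x hx
  have hx0 : 0 < x := lt_of_lt_of_le (by positivity) hx.1
  have hC3 : (0:ℝ) ≤ C ^ (3:ℕ) := by positivity
  have e1 : x ^ (2*θ-2) ≤ C ^ (3:ℕ) := rpow_bound hC hx.1 (by linarith) (by linarith)
  have e2 : x ^ (2*θ-3) ≤ C ^ (3:ℕ) := rpow_bound hC hx.1 (by linarith) (by linarith)
  have e3 : x ^ (θ-3) ≤ C ^ (3:ℕ) := rpow_bound hC hx.1 (by linarith) (by linarith)
  have c1 : |(-θ^2*(2*θ+2)*(2*θ+1)*(2*θ)*(2*θ-1))| ≤ 243 := by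
    have : |(-θ^2*(2*θ+2)*(2*θ+1)*(2*θ)*(2*θ-1))| ≤ 3*3*3*3*3 :=
      abs_prod_le (abs_prod_le (abs_prod_le (abs_prod_le
        (by rw [abs_le]; constructor <;> nlinarith)
        (by rw [abs_le]; constructor <;> nlinarith))
        (by rw [abs_le]; constructor <;> nlinarith))
        (by rw [abs_le]; constructor <;> nlinarith))
        (by rw [abs_le]; constructor <;> nlinarith)
    linarith
  have c2 : |((θ+1)^2*(2*θ+1)*(2*θ)*(2*θ-1)*(2*θ-2))| ≤ 243 := by
    have : |((θ+1)^2*(2*θ+1)*(2*θ)*(2*θ-1)*(2*θ-2))| ≤ 3*3*3*3*3 :=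
      abs_prod_le (abs_prod_le (abs_prod_le (abs_prod_le
        (by rw [abs_le]; constructor <;> nlinarith)
        (by rw [abs_le]; constructor <;> nlinarith))
        (by rw [abs_le]; constructor <;> nlinarith))
        (by rw [abs_le]; constructor <;> nlinarith))
        (by rw [abs_le]; constructor <;> nlinarith)
    linarith
  have c3 : |(2*(2*θ+1)*(θ+1)*θ*(θ-1)*(θ-2))| ≤ 243 := by
    have : |(2*(2*θ+1)*(θ+1)*θ*(θ-1)*(θ-2))| ≤ 4*2*1*1*2 :=
      abs_prod_le (abs_prod_le (abs_prod_le (abs_prod_le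
        (by rw [abs_le]; constructor <;> nlinarith)
        (by rw [abs_le]; constructor <;> nlinarith))
        (by rw [abs_le]; constructor <;> nlinarith))
        (by rw [abs_le]; constructor <;> nlinarith))
        (by rw [abs_le]; constructor <;> nlinarith)
    linarith
  have t1 := abs_rpow_term hx0 c1 e1 (by norm_num)
  have t2 := abs_rpow_term hx0 c2 e2 (by norm_num)
  have t3 := abs_rpow_term hx0 c3 e3 (by norm_num)
  have habs : |M4 θ x| ≤ |(-θ^2*(2*θ+2)*(2*θ+1)*(2*θ)*(2*θ-1) * x ^ (2*θ-2))|
        + |((θ+1)^2*(2*θ+1)*(2*θ)*(2*θ-1)*(2*θ-2) * x ^ (2*θ-3))|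
        + |(2*(2*θ+1)*(θ+1)*θ*(θ-1)*(θ-2) * x ^ (θ-3))| := by
    unfold M4
    exact (abs_sub _ _).trans (by gcongr; exact abs_add_le _ _)
  simp only [pow_zero, mul_one]
  linarith

lemma M0_bound (θ C : ℝ) (hθ0 : 0 < θ) (hθ3 : θ ≤ 1/3) (hC : 1 < C) :
    ∀ x ∈ Set.Icc (1/C) C, |M0 θ x| ≤ 729 * C ^ (3:ℕ) * |x - 1| ^ 4 := by
  have hC0 : (0:ℝ) < C := by linarith
  have hK : (0:ℝ) ≤ 729 * C ^ (3:ℕ) := by positivity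
  have hlo1 : 1/C ≤ 1 := by rw [div_le_one hC0]; linarith
  have h1hi : (1:ℝ) ≤ C := hC.le
  have hpos : ∀ x ∈ Set.Icc (1/C) C, (0:ℝ) < x := fun x hx => lt_of_lt_of_le (by positivity) hx.1
  have b3 := chain_step (M3 θ) (M4 θ) (1/C) C _ 0 hK hlo1 h1hi
    (fun x hx => hdM3 θ (hpos x hx)) (M3_one θ) (M4_bound θ C hθ0 hθ3 hC)
  have b2 := chain_step (M2 θ) (M3 θ) (1/C) C _ 1 hK hlo1 h1hi
    (fun x hx => hdM2 θ (hpos x hx)) (M2_one θ) b3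
  have b1 := chain_step (M1 θ) (M2 θ) (1/C) C _ 2 hK hlo1 h1hi
    (fun x hx => hdM1 θ (hpos x hx)) (M1_one θ) b2
  exact chain_step (M0 θ) (M1 θ) (1/C) C _ 3 hK hlo1 h1hi
    (fun x hx => hdM0 θ (hpos x hx)) (M0_one θ) b1
lemma slope_lb (θ C : ℝ) (hθ0 : 0 < θ) (hθ3 : θ ≤ 1/3) (hC : 1 < C) (x : ℝ)
    (hx1 : 1/C ≤ x) (hx2 : x ≤ C) (hxne : x ≠ 1) :
    1/C ≤ (x ^ θ - 1) / (θ * (x - 1)) := by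
  have hC0 : (0:ℝ) < C := by linarith
  have hx0 : 0 < x := lt_of_lt_of_le (by positivity) hx1
  have hf : ∀ y : ℝ, 0 < y → HasDerivAt (fun z : ℝ => z ^ θ / θ) (y ^ (θ-1)) y := by
    intro y hy
    have h := (Real.hasDerivAt_rpow_const (x := y) (p := θ) (Or.inl hy.ne')).div_const θ
    refine h.congr_deriv ?_
    field_simp
  have hlb : ∀ c : ℝ, 0 < c → c ≤ C → 1/C ≤ c ^ (θ-1) := by
    intro c hc0 hcC
    have h1 : C ^ (θ-1) ≤ c ^ (θ-1) := Real.rpow_le_rpow_of_nonpos hc0 hcC (by linarith)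
    have h2 : C ^ (-1:ℝ) ≤ C ^ (θ-1) := Real.rpow_le_rpow_of_exponent_le hC.le (by linarith)
    rw [Real.rpow_neg_one, ← one_div] at h2
    linarith
  rcases lt_or_gt_of_ne hxne with hlt | hgt
  · obtain ⟨c, hc, hceq⟩ := exists_hasDerivAt_eq_slope (fun z : ℝ => z ^ θ / θ)
      (fun y => y ^ (θ-1)) hlt
      (fun y hy => (hf y (lt_of_lt_of_le hx0 hy.1)).continuousAt.continuousWithinAt)
      (fun y hy => hf y (lt_of_lt_of_le hx0 hy.1.le))
    have hc0 : 0 < c := lt_trans hx0 hc.1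
    have heq : (x ^ θ - 1) / (θ * (x - 1)) = c ^ (θ-1) := by
      rw [hceq, Real.one_rpow]
      have h1 : (1:ℝ) - x ≠ 0 := sub_ne_zero.2 (by linarith)
      have h2 : x - 1 ≠ 0 := sub_ne_zero.2 hxne
      field_simp
      all_goals ring
    rw [heq]
    exact hlb c hc0 (by linarith [hc.2])
  · obtain ⟨c, hc, hceq⟩ := exists_hasDerivAt_eq_slope (fun z : ℝ => z ^ θ / θ)
      (fun y => y ^ (θ-1)) hgt
      (fun y hy => (hf y (lt_of_lt_of_le one_pos hy.1)).continuousAt.continuousWithinAt)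
      (fun y hy => hf y (lt_trans one_pos hy.1))
    have hc0 : 0 < c := lt_trans one_pos hc.1
    have heq : (x ^ θ - 1) / (θ * (x - 1)) = c ^ (θ-1) := by
      rw [hceq, Real.one_rpow]
      have h2 : x - 1 ≠ 0 := sub_ne_zero.2 hxne
      field_simp
      all_goals ring
    rw [heq]
    exact hlb c hc0 (by linarith [hc.2, hx2])

set_option maxHeartbeats 1000000 in
lemma key (θ C : ℝ) (hθ0 : 0 < θ) (hθ3 : θ ≤ 1/3) (hC : 1 < C) (x : ℝ)
    (hx1 : 1/C ≤ x) (hx2 : x ≤ C) (hxne : x ≠ 1) :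
    |(x ^ θ - 1)/θ - Real.sqrt ((x ^ (2*θ+1) - 1)/((2*θ+1) * x * (x-1))) * (x-1)|
      ≤ (729 * C ^ (5:ℕ) / (θ^2*(2*θ+1))) * |x-1|^3 := by
  have hC0 : (0:ℝ) < C := by linarith
  have hx0 : 0 < x := lt_of_lt_of_le (by positivity) hx1
  have hxm : x - 1 ≠ 0 := sub_ne_zero.2 hxne
  have hθ1 : (0:ℝ) < 2*θ+1 := by linarith
  set q : ℝ := (x ^ (2*θ+1) - 1)/((2*θ+1) * x * (x-1)) with hqdef
  have hq0 : 0 ≤ q := by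
    rcases lt_or_gt_of_ne hxne with hlt | hgt
    · have hnum : x ^ (2*θ+1) - 1 ≤ 0 := by
        have := Real.rpow_lt_one (z := 2*θ+1) hx0.le hlt (by linarith)
        linarith
      have hden : (2*θ+1) * x * (x-1) ≤ 0 := by
        have h : (0:ℝ) < (2*θ+1) * x := by positivity
        nlinarith [mul_nonneg h.le (by linarith : (0:ℝ) ≤ 1 - x)]
      rw [hqdef, ← neg_div_neg_eq]
      refine div_nonneg ?_ ?_ <;> linarith
    · have hnum : 0 ≤ x ^ (2*θ+1) - 1 := by
        have := Real.one_lt_rpow_iff_of_pos hx0 (y := 2*θ+1) |>.2 (Or.inl ⟨hgt, by linarith⟩)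
        linarith
      have hden : 0 ≤ (2*θ+1) * x * (x-1) := by
        have : (0:ℝ) < (2*θ+1) * x := by positivity
        nlinarith
      exact div_nonneg hnum hden
  set s : ℝ := Real.sqrt q with hsdef
  have hs2 : s^2 = q := Real.sq_sqrt hq0
  have hs0 : 0 ≤ s := Real.sqrt_nonneg q
  set t : ℝ := (x ^ θ - 1) / (θ * (x - 1)) with htdef
  have ht : 1/C ≤ t := slope_lb θ C hθ0 hθ3 hC x hx1 hx2 hxne
  have ht0 : 0 < t := lt_of_lt_of_le (by positivity) ht
  have hteq : (x ^ θ - 1)/θ = t * (x-1) := by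
    rw [htdef]
    field_simp
  -- algebraic identity
  have hpow1 : x ^ (2*θ+1) = (x^θ)^2 * x := by
    rw [show 2*θ+1 = θ*2 + 1 by ring, Real.rpow_add hx0, Real.rpow_one,
      Real.rpow_mul hx0.le, Real.rpow_two]
  have hts : t^2 - s^2 = M0 θ x / (θ^2*(2*θ+1)*x*(x-1)^2) := by
    rw [hs2, hqdef, htdef]
    unfold M0
    have hpow2 : x ^ (2*θ+2) = (x^θ)^2 * x^2 := by
      rw [show 2*θ+2 = θ*2 + 2 by ring, Real.rpow_add hx0,
        Real.rpow_mul hx0.le, Real.rpow_two, Real.rpow_two]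
    have hpow3 : x ^ (θ+1) = x^θ * x := by
      rw [Real.rpow_add hx0, Real.rpow_one]
    rw [hpow1, hpow2, hpow3]
    field_simp
    ring
  have hden : 0 < θ^2*(2*θ+1)*x*(x-1)^2 := by
    have h2 : (0:ℝ) < (x-1)^2 := lt_of_le_of_ne (sq_nonneg _) (Ne.symm (pow_ne_zero 2 hxm))
    positivity
  have hM0 := M0_bound θ C hθ0 hθ3 hC x ⟨hx1, hx2⟩
  have hCx : 1 ≤ C * x := by
    nlinarith [(div_le_iff₀ hC0).1 hx1]
  have key1 : |t^2 - s^2| ≤ 729 * C ^ (4:ℕ)/(θ^2*(2*θ+1)) * (x-1)^2 := by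
    rw [hts, abs_div, abs_of_pos hden, div_le_iff₀ hden]
    have hre : 729 * C ^ (4:ℕ)/(θ^2*(2*θ+1)) * (x-1)^2 * (θ^2*(2*θ+1)*x*(x-1)^2)
        = 729 * C ^ (4:ℕ) * x * (x-1)^4 := by
      field_simp
    rw [hre]
    have habs4 : |x-1|^4 = (x-1)^4 := by
      rw [← abs_pow, abs_of_nonneg (by positivity)]
    calc |M0 θ x| ≤ 729 * C ^ (3:ℕ) * |x-1|^4 := hM0
      _ = 729 * C ^ (3:ℕ) * (x-1)^4 := by rw [habs4]
      _ ≤ 729 * C ^ (4:ℕ) * x * (x-1)^4 := by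
          nlinarith [mul_nonneg (sub_nonneg.2 hCx)
            (by positivity : (0:ℝ) ≤ C ^ (3:ℕ) * (x-1)^4)]
  have key2 : |t - s| ≤ C * |t^2 - s^2| := by
    have hE : |t^2 - s^2| = |t - s| * (t + s) := by
      rw [show t^2 - s^2 = (t-s)*(t+s) by ring, abs_mul, abs_of_nonneg (show (0:ℝ) ≤ t + s by linarith)]
    have h1c : 1 ≤ C * (t + s) := by
      have hts' : 1/C ≤ t + s := by linarith
      nlinarith [(div_le_iff₀ hC0).1 hts']
    nlinarith [mul_nonneg (abs_nonneg (t - s)) (sub_nonneg.2 h1c), hE]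
  have hfe : (x ^ θ - 1)/θ - s * (x-1) = (t - s) * (x-1) := by
    rw [hteq]; ring
  rw [hfe, abs_mul]
  have habs2 : (x-1)^2 = |x-1|^2 := (sq_abs _).symm
  calc |t - s| * |x - 1| ≤ (C * (729 * C ^ (4:ℕ)/(θ^2*(2*θ+1)) * (x-1)^2)) * |x-1| := by
        apply mul_le_mul_of_nonneg_right _ (abs_nonneg _)
        exact key2.trans (mul_le_mul_of_nonneg_left key1 hC0.le)
    _ = 729 * C ^ (5:ℕ) / (θ^2*(2*θ+1)) * |x-1|^3 := by
        rw [show |x-1|^3 = |x-1|^2*|x-1| by ring, ← habs2]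
        ring
set_option maxHeartbeats 1000000 in
/-- Along the 1-shock curve `S₁` through `(ρ₀,v₀)`, the Riemann
invariant `w = v + ρ^θ/θ` differs from `w₀` by `O(1)·ρ₀^{(γ−7)/2}·|ρ−ρ₀|³`
uniformly for `1/C ≤ ρ/ρ₀ ≤ C`: second-order tangency of `S₁` and `R₁`. -/
theorem stmt_9 (γ θ : ℝ) (hγ1 : 1 < γ) (hγ2 : γ ≤ 5 / 3) (hθ : θ = (γ - 1) / 2)
    (C : ℝ) (hC : 1 < C) :
    ∃ A : ℝ, 0 < A ∧
      ∀ ρ₀ ρ v₀ : ℝ, 0 < ρ₀ → 0 < ρ → 1 / C ≤ ρ / ρ₀ → ρ / ρ₀ ≤ C → ρ ≠ ρ₀ →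
        |(v₀ - Real.sqrt ((ρ ^ γ / γ - ρ₀ ^ γ / γ) / (ρ * ρ₀ * (ρ - ρ₀))) * (ρ - ρ₀)
            + ρ ^ θ / θ)
          - (v₀ + ρ₀ ^ θ / θ)|
        ≤ A * ρ₀ ^ ((γ - 7) / 2) * |ρ - ρ₀| ^ 3 := by
  have hθ0 : 0 < θ := by rw [hθ]; linarith
  have hθ3 : θ ≤ 1/3 := by rw [hθ]; linarith
  have hγθ : γ = 2*θ+1 := by rw [hθ]; ring
  have hθ1 : (0:ℝ) < 2*θ+1 := by linarith
  have hC0 : (0:ℝ) < C := by linarith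
  refine ⟨729 * C ^ (5:ℕ) / (θ^2*(2*θ+1)), by positivity, ?_⟩
  intro ρ₀ ρ v₀ hρ₀ hρ hr1 hr2 hne
  rw [hγθ]
  set x := ρ / ρ₀ with hxdef
  have hx0 : 0 < x := div_pos hρ hρ₀
  have hxne : x ≠ 1 := fun h => hne ((div_eq_one_iff_eq hρ₀.ne').1 h)
  have hxm : x - 1 ≠ 0 := sub_ne_zero.2 hxne
  have hρx : ρ = x * ρ₀ := (div_mul_cancel₀ ρ hρ₀.ne').symm
  have hkey := key θ C hθ0 hθ3 hC x hr1 hr2 hxne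
  set qx : ℝ := (x ^ (2*θ+1) - 1)/((2*θ+1) * x * (x-1)) with hqxdef
  have G3 : ρ - ρ₀ = ρ₀ * (x - 1) := by rw [hρx]; ring
  have h3 : ρ₀ ^ (2*θ+1) = ρ₀^(2*θ+1-3) * (ρ₀*ρ₀*ρ₀) := by
    rw [show ρ₀*ρ₀*ρ₀ = ρ₀^((3:ℕ):ℝ) by rw [Real.rpow_natCast]; ring,
        ← Real.rpow_add hρ₀]
    norm_num
  have hd1 : x*ρ₀ - ρ₀ ≠ 0 := by
    rw [show x*ρ₀ - ρ₀ = ρ₀*(x-1) by ring]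
    exact mul_ne_zero hρ₀.ne' hxm
  have hQ : (ρ^(2*θ+1)/(2*θ+1) - ρ₀^(2*θ+1)/(2*θ+1))/(ρ*ρ₀*(ρ-ρ₀))
      = ρ₀^(2*θ+1-3) * qx := by
    rw [hqxdef, hρx, Real.mul_rpow hx0.le hρ₀.le, h3]
    field_simp [hθ1.ne', hx0.ne', hρ₀.ne', hxm, hd1]
  have G1 : Real.sqrt ((ρ^(2*θ+1)/(2*θ+1) - ρ₀^(2*θ+1)/(2*θ+1))/(ρ*ρ₀*(ρ-ρ₀)))
      = ρ₀^((2*θ+1-3)/2) * Real.sqrt qx := by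
    rw [hQ, Real.sqrt_mul (Real.rpow_nonneg hρ₀.le _) _, Real.sqrt_eq_rpow,
        ← Real.rpow_mul hρ₀.le, show (2*θ+1-3)*(1/2) = (2*θ+1-3)/2 by ring]
  have G4 : ρ₀^((2*θ+1-3)/2) * ρ₀ = ρ₀^θ := by
    have h := Real.rpow_add hρ₀ ((2*θ+1-3)/2) 1
    rw [Real.rpow_one, show (2*θ+1-3)/2 + 1 = θ by ring] at h
    exact h.symm
  have G5 : ρ₀ ^ ((2*θ+1-7)/2) * |ρ - ρ₀|^3 = ρ₀^θ * |x-1|^3 := by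
    rw [G3, abs_mul, abs_of_pos hρ₀, mul_pow,
        show (ρ₀^3 : ℝ) = ρ₀^((3:ℕ):ℝ) by rw [Real.rpow_natCast],
        ← mul_assoc, ← Real.rpow_add hρ₀,
        show (2*θ+1-7)/2 + ((3:ℕ):ℝ) = θ by push_cast; ring]
  have G2 : ρ ^ θ = x^θ * ρ₀^θ := by rw [hρx, Real.mul_rpow hx0.le hρ₀.le]
  have hLHS : (v₀ - Real.sqrt ((ρ^(2*θ+1)/(2*θ+1) - ρ₀^(2*θ+1)/(2*θ+1))/(ρ*ρ₀*(ρ-ρ₀))) * (ρ-ρ₀)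
        + ρ^θ/θ) - (v₀ + ρ₀^θ/θ)
      = ρ₀^θ * ((x^θ-1)/θ - Real.sqrt qx * (x-1)) := by
    rw [G1, G3, G2]
    linear_combination (-(Real.sqrt qx * (x-1))) * G4
  rw [hLHS, mul_assoc, G5, abs_mul, abs_of_pos (Real.rpow_pos_of_pos hρ₀ θ)]
  calc ρ₀^θ * |(x^θ-1)/θ - Real.sqrt qx * (x-1)|
      ≤ ρ₀^θ * (729 * C ^ (5:ℕ) / (θ^2*(2*θ+1)) * |x-1|^3) :=
        mul_le_mul_of_nonneg_left hkey (Real.rpow_pos_of_pos hρ₀ θ).le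
    _ = 729 * C ^ (5:ℕ) / (θ^2*(2*θ+1)) * (ρ₀^θ * |x-1|^3) := by ring
end

section
/- Let γ ∈ (1,5/3], θ = (γ-1)/2, p(ρ) = ρ^γ/γ, and C > 1. There exists a constant A > 0, depending only on γ and C, with the following property: for all ρ₀ > 0 and ρ > 0 with 1/C ≤ ρ/ρ₀ ≤ C, ρ ≠ ρ₀, and all v₀ ∈ ℝ, if v = v₀ + sqrt( (p(ρ) − p(ρ₀)) / (ρ·ρ₀·(ρ − ρ₀)) )·(ρ − ρ₀) (the state on the 2-shock curve S₂ through (ρ₀,v₀)), then | (v − ρ^θ/θ) − (v₀ − ρ₀^θ/θ) | ≤ A·ρ₀^{(γ−7)/2}·|ρ − ρ₀|³. In particular, the 2-shock curve and the 2-rarefaction curve z = const have a tangency of second order at (ρ₀,v₀). -/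
open Real Set

/-- MVT step: if `f 1 = 0` and `|f'| ≤ K|t-1|^n` on an interval containing `1`,
then `|f s| ≤ K|s-1|^(n+1)` there. -/
lemma shock_mvt_step {f f' : ℝ → ℝ} {K : ℝ} {n : ℕ} {lo hi s : ℝ}
    (h1 : (1:ℝ) ∈ Icc lo hi) (hs : s ∈ Icc lo hi)
    (hd : ∀ t ∈ Icc lo hi, HasDerivAt f (f' t) t)
    (hf1 : f 1 = 0) (hK : 0 ≤ K)
    (hb : ∀ t ∈ Icc lo hi, |f' t| ≤ K * |t - 1| ^ n) :
    |f s| ≤ K * |s - 1| ^ (n + 1) := by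
  have hsub : uIcc 1 s ⊆ Icc lo hi := uIcc_subset_Icc h1 hs
  have habs : ∀ t ∈ uIcc (1:ℝ) s, |t - 1| ≤ |s - 1| := by
    intro t ht
    rcases le_total (1:ℝ) s with h | h
    · rw [uIcc_of_le h] at ht
      rw [abs_of_nonneg (by linarith [ht.1]), abs_of_nonneg (by linarith)]
      linarith [ht.2]
    · rw [uIcc_of_ge h] at ht
      rw [abs_of_nonpos (by linarith [ht.2]), abs_of_nonpos (by linarith)]
      linarith [ht.1]
  have key := Convex.norm_image_sub_le_of_norm_hasDerivWithin_le
    (f := f) (f' := f') (s := uIcc 1 s) (C := K * |s - 1| ^ n)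
    (fun t ht => (hd t (hsub ht)).hasDerivWithinAt)
    (fun t ht => by
      rw [Real.norm_eq_abs]
      refine le_trans (hb t (hsub ht)) ?_
      exact mul_le_mul_of_nonneg_left (pow_le_pow_left₀ (abs_nonneg _) (habs t ht) n) hK)
    (convex_uIcc 1 s) left_mem_uIcc right_mem_uIcc
  rw [hf1, sub_zero, Real.norm_eq_abs, Real.norm_eq_abs] at key
  calc |f s| ≤ K * |s - 1| ^ n * |s - 1| := key
    _ = K * |s - 1| ^ (n + 1) := by ring

/-- On `[1/C, C]` with `C > 1`, `s^β ≤ C^3` whenever `|β| ≤ 3`. -/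
lemma shock_rpow_bnd {C s β : ℝ} (hC : 1 < C) (h1 : 1 / C ≤ s) (h2 : s ≤ C) (hβ : |β| ≤ 3) :
    s ^ β ≤ C ^ (3:ℝ) := by
  have hC0 : (0:ℝ) < C := by linarith
  have hs0 : 0 < s := lt_of_lt_of_le (by positivity) h1
  rcases le_or_gt 0 β with hb | hb
  · calc s ^ β ≤ C ^ β := Real.rpow_le_rpow hs0.le h2 hb
      _ ≤ C ^ (3:ℝ) := Real.rpow_le_rpow_of_exponent_le hC.le ((abs_le.mp hβ).2)
  · have hinv : s⁻¹ ≤ C := by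
      rw [inv_le_comm₀ hs0 hC0]
      calc C⁻¹ = 1 / C := by rw [one_div]
        _ ≤ s := h1
    have : s ^ β = (s⁻¹) ^ (-β) := by
      rw [Real.inv_rpow hs0.le, ← Real.rpow_neg hs0.le, neg_neg]
    rw [this]
    calc (s⁻¹) ^ (-β) ≤ C ^ (-β) := Real.rpow_le_rpow (by positivity) hinv (by linarith)
      _ ≤ C ^ (3:ℝ) := Real.rpow_le_rpow_of_exponent_le hC.le (by
          have := (abs_le.mp hβ).1; linarith)

lemma shock_N_bound (γ θ C : ℝ) (hγ1 : 1 < γ) (hγ2 : γ ≤ 5/3) (hθ : θ = (γ-1)/2)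
    (hC : 1 < C) :
    ∃ K : ℝ, 0 < K ∧ ∀ s : ℝ, 1/C ≤ s → s ≤ C →
      |θ^2 * s^(γ+1) - (θ+1)^2 * s^γ + 2*γ*s^(θ+1) - (θ+1)^2*s + θ^2| ≤ K * |s-1|^4 := by
  have hγ : γ = 2*θ + 1 := by rw [hθ]; ring
  have hC0 : (0:ℝ) < C := by linarith
  have hθ0 : 0 < θ := by rw [hθ]; linarith
  have hθ3 : θ ≤ 1/3 := by rw [hθ]; linarith
  set N₀ : ℝ → ℝ := fun t => θ^2 * t^(γ+1) - (θ+1)^2 * t^γ + 2*γ*t^(θ+1) - (θ+1)^2*t + θ^2 with hN₀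
  set N₁ : ℝ → ℝ := fun t => θ^2*(γ+1) * t^γ - (θ+1)^2*γ * t^(γ-1) + 2*γ*(θ+1)*t^θ - (θ+1)^2 with hN₁
  set N₂ : ℝ → ℝ := fun t => θ^2*(γ+1)*γ * t^(γ-1) - (θ+1)^2*γ*(γ-1) * t^(γ-2) + 2*γ*(θ+1)*θ*t^(θ-1) with hN₂
  set N₃ : ℝ → ℝ := fun t => θ^2*(γ+1)*γ*(γ-1) * t^(γ-2) - (θ+1)^2*γ*(γ-1)*(γ-2) * t^(γ-3) + 2*γ*(θ+1)*θ*(θ-1)*t^(θ-2) with hN₃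
  set N₄ : ℝ → ℝ := fun t => θ^2*(γ+1)*γ*(γ-1)*(γ-2) * t^(γ-3) - (θ+1)^2*γ*(γ-1)*(γ-2)*(γ-3) * t^(γ-4) + 2*γ*(θ+1)*θ*(θ-1)*(θ-2)*t^(θ-3) with hN₄
  set K : ℝ := (|θ^2*(γ+1)*γ*(γ-1)*(γ-2)| + |(θ+1)^2*γ*(γ-1)*(γ-2)*(γ-3)| + |2*γ*(θ+1)*θ*(θ-1)*(θ-2)| + 1) * C^(3:ℝ) with hK
  have hKpos : 0 < K := by
    apply mul_pos
    · positivity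
    · exact Real.rpow_pos_of_pos hC0 _
  have hmem : ∀ t : ℝ, t ∈ Icc (1/C) C → 0 < t := fun t ht => lt_of_lt_of_le (by positivity) ht.1
  have h1mem : (1:ℝ) ∈ Icc (1/C) C := by
    constructor
    · rw [div_le_one hC0]; linarith
    · linarith
  -- derivative chains
  have hd0 : ∀ t ∈ Icc (1/C) C, HasDerivAt N₀ (N₁ t) t := by
    intro t ht
    have ht0 := hmem t ht
    have e1 := (Real.hasDerivAt_rpow_const (x := t) (p := γ+1) (Or.inl ht0.ne')).const_mul (θ^2)
    have e2 := (Real.hasDerivAt_rpow_const (x := t) (p := γ) (Or.inl ht0.ne')).const_mul ((θ+1)^2)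
    have e3 := (Real.hasDerivAt_rpow_const (x := t) (p := θ+1) (Or.inl ht0.ne')).const_mul (2*γ)
    have e4 := (hasDerivAt_id t).const_mul ((θ+1)^2)
    have := (((e1.sub e2).add e3).sub e4).add_const (θ^2)
    convert this using 1
    · rfl
    · rfl
    · rfl
    rw [hN₁]
    simp only []
    rw [show γ + 1 - 1 = γ by ring, show θ + 1 - 1 = θ by ring]
    ring
  have hd1 : ∀ t ∈ Icc (1/C) C, HasDerivAt N₁ (N₂ t) t := by
    intro t ht
    have ht0 := hmem t ht
    have e1 := (Real.hasDerivAt_rpow_const (x := t) (p := γ) (Or.inl ht0.ne')).const_mul (θ^2*(γ+1))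
    have e2 := (Real.hasDerivAt_rpow_const (x := t) (p := γ-1) (Or.inl ht0.ne')).const_mul ((θ+1)^2*γ)
    have e3 := (Real.hasDerivAt_rpow_const (x := t) (p := θ) (Or.inl ht0.ne')).const_mul (2*γ*(θ+1))
    have := ((e1.sub e2).add e3).sub_const ((θ+1)^2)
    convert this using 1
    · rfl
    · rfl
    · rfl
    rw [hN₂]
    simp only []
    rw [show γ - 1 - 1 = γ - 2 by ring, show θ - 1 = θ - 1 by ring]
    ring
  have hd2 : ∀ t ∈ Icc (1/C) C, HasDerivAt N₂ (N₃ t) t := by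
    intro t ht
    have ht0 := hmem t ht
    have e1 := (Real.hasDerivAt_rpow_const (x := t) (p := γ-1) (Or.inl ht0.ne')).const_mul (θ^2*(γ+1)*γ)
    have e2 := (Real.hasDerivAt_rpow_const (x := t) (p := γ-2) (Or.inl ht0.ne')).const_mul ((θ+1)^2*γ*(γ-1))
    have e3 := (Real.hasDerivAt_rpow_const (x := t) (p := θ-1) (Or.inl ht0.ne')).const_mul (2*γ*(θ+1)*θ)
    have := (e1.sub e2).add e3
    convert this using 1
    · rfl
    · rfl
    · rfl
    rw [hN₃]
    simp only []
    rw [show γ - 1 - 1 = γ - 2 by ring, show γ - 2 - 1 = γ - 3 by ring,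
      show θ - 1 - 1 = θ - 2 by ring]
    ring
  have hd3 : ∀ t ∈ Icc (1/C) C, HasDerivAt N₃ (N₄ t) t := by
    intro t ht
    have ht0 := hmem t ht
    have e1 := (Real.hasDerivAt_rpow_const (x := t) (p := γ-2) (Or.inl ht0.ne')).const_mul (θ^2*(γ+1)*γ*(γ-1))
    have e2 := (Real.hasDerivAt_rpow_const (x := t) (p := γ-3) (Or.inl ht0.ne')).const_mul ((θ+1)^2*γ*(γ-1)*(γ-2))
    have e3 := (Real.hasDerivAt_rpow_const (x := t) (p := θ-2) (Or.inl ht0.ne')).const_mul (2*γ*(θ+1)*θ*(θ-1))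
    have := (e1.sub e2).add e3
    convert this using 1
    · rfl
    · rfl
    · rfl
    rw [hN₄]
    simp only []
    rw [show γ - 2 - 1 = γ - 3 by ring, show γ - 3 - 1 = γ - 4 by ring,
      show θ - 2 - 1 = θ - 3 by ring]
    ring
  -- vanishing at 1
  have hv0 : N₀ 1 = 0 := by rw [hN₀]; simp [Real.one_rpow]; rw [hγ]; ring
  have hv1 : N₁ 1 = 0 := by rw [hN₁]; simp [Real.one_rpow]; rw [hγ]; ring
  have hv2 : N₂ 1 = 0 := by rw [hN₂]; simp [Real.one_rpow]; rw [hγ]; ring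
  have hv3 : N₃ 1 = 0 := by rw [hN₃]; simp [Real.one_rpow]; rw [hγ]; ring
  -- bound on N₄
  have hb4 : ∀ t ∈ Icc (1/C) C, |N₄ t| ≤ K * |t - 1| ^ 0 := by
    intro t ht
    have ht0 := hmem t ht
    have hbnd : ∀ β : ℝ, |β| ≤ 3 → t ^ β ≤ C ^ (3:ℝ) :=
      fun β hβ => shock_rpow_bnd hC ht.1 ht.2 hβ
    have hC3 : (0:ℝ) < C ^ (3:ℝ) := Real.rpow_pos_of_pos hC0 _
    have habs : ∀ c β : ℝ, |β| ≤ 3 → |c * t ^ β| ≤ |c| * C ^ (3:ℝ) := by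
      intro c β hβ
      rw [abs_mul, abs_of_nonneg (Real.rpow_nonneg ht0.le β)]
      exact mul_le_mul_of_nonneg_left (hbnd β hβ) (abs_nonneg c)
    rw [pow_zero, mul_one, hN₄, hK]
    have h1 := habs (θ^2*(γ+1)*γ*(γ-1)*(γ-2)) (γ-3) (by rw [abs_le]; constructor <;> linarith)
    have h2 := habs ((θ+1)^2*γ*(γ-1)*(γ-2)*(γ-3)) (γ-4) (by rw [abs_le]; constructor <;> linarith)
    have h3 := habs (2*γ*(θ+1)*θ*(θ-1)*(θ-2)) (θ-3) (by rw [abs_le]; constructor <;> linarith)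
    calc |θ^2*(γ+1)*γ*(γ-1)*(γ-2) * t^(γ-3) - (θ+1)^2*γ*(γ-1)*(γ-2)*(γ-3) * t^(γ-4) + 2*γ*(θ+1)*θ*(θ-1)*(θ-2)*t^(θ-3)|
        ≤ |θ^2*(γ+1)*γ*(γ-1)*(γ-2) * t^(γ-3)| + |(θ+1)^2*γ*(γ-1)*(γ-2)*(γ-3) * t^(γ-4)| + |2*γ*(θ+1)*θ*(θ-1)*(θ-2)*t^(θ-3)| := by
          refine le_trans (abs_add_le _ _) ?_
          gcongr
          exact abs_sub _ _
      _ ≤ |θ^2*(γ+1)*γ*(γ-1)*(γ-2)| * C^(3:ℝ) + |(θ+1)^2*γ*(γ-1)*(γ-2)*(γ-3)| * C^(3:ℝ) + |2*γ*(θ+1)*θ*(θ-1)*(θ-2)| * C^(3:ℝ) := by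
          gcongr
      _ ≤ (|θ^2*(γ+1)*γ*(γ-1)*(γ-2)| + |(θ+1)^2*γ*(γ-1)*(γ-2)*(γ-3)| + |2*γ*(θ+1)*θ*(θ-1)*(θ-2)| + 1) * C^(3:ℝ) := by
          nlinarith [hC3]
  -- chain
  refine ⟨K, hKpos, fun s hs1 hs2 => ?_⟩
  have hsmem : s ∈ Icc (1/C) C := ⟨hs1, hs2⟩
  have h3 : ∀ u ∈ Icc (1/C) C, |N₃ u| ≤ K * |u - 1| ^ 1 := fun u hu =>
    shock_mvt_step h1mem hu hd3 hv3 hKpos.le hb4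
  have h2 : ∀ u ∈ Icc (1/C) C, |N₂ u| ≤ K * |u - 1| ^ 2 := fun u hu =>
    shock_mvt_step h1mem hu hd2 hv2 hKpos.le h3
  have h1 : ∀ u ∈ Icc (1/C) C, |N₁ u| ≤ K * |u - 1| ^ 3 := fun u hu =>
    shock_mvt_step h1mem hu hd1 hv1 hKpos.le h2
  have h0 := shock_mvt_step h1mem hsmem hd0 hv0 hKpos.le h1
  exact h0
set_option maxHeartbeats 1000000

lemma shock_G_bound (γ θ C : ℝ) (hγ1 : 1 < γ) (hγ2 : γ ≤ 5/3) (hθ : θ = (γ-1)/2)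
    (hC : 1 < C) :
    ∃ A : ℝ, 0 < A ∧ ∀ s : ℝ, 1/C ≤ s → s ≤ C → s ≠ 1 →
      |Real.sqrt ((s^γ - 1)/(γ*s*(s-1))) * (s-1) - (s^θ - 1)/θ| ≤ A * |s-1|^3 := by
  obtain ⟨K, hKpos, hN⟩ := shock_N_bound γ θ C hγ1 hγ2 hθ hC
  have hγ : γ = 2*θ + 1 := by rw [hθ]; ring
  have hC0 : (0:ℝ) < C := by linarith
  have hθ0 : 0 < θ := by rw [hθ]; linarith
  have hγ0 : 0 < γ := by linarith
  refine ⟨C^(γ/2) * (K*C/(γ*θ^2)),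
    mul_pos (Real.rpow_pos_of_pos hC0 _) (div_pos (mul_pos hKpos hC0) (by positivity)),
    fun s hs1 hs2 hne => ?_⟩
  have hs0 : 0 < s := lt_of_lt_of_le (by positivity) hs1
  have hs10 : s - 1 ≠ 0 := sub_ne_zero.mpr hne
  set q : ℝ := (s^γ - 1)/(γ*s*(s-1)) with hqdef
  -- lower bound on q
  have hq : C^(-γ) ≤ q := by
    rcases lt_or_gt_of_ne hne with hlt | hgt
    · -- s < 1
      have hx : (0:ℝ) ≤ (1-s)/s := le_of_lt (div_pos (by linarith) hs0)
      have hb0 := one_add_mul_self_le_rpow_one_add (s := (1-s)/s) (by linarith) hγ1.le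
      rw [show (1:ℝ) + (1-s)/s = s⁻¹ by field_simp; ring] at hb0
      rw [Real.inv_rpow hs0.le] at hb0
      have hsγ : 0 < s^γ := Real.rpow_pos_of_pos hs0 _
      have key : γ * s^(γ-1) * (1-s) ≤ 1 - s^γ := by
        have h2 : (1 + γ*((1-s)/s)) * s^γ ≤ 1 := by
          have := mul_le_mul_of_nonneg_right hb0 hsγ.le
          rwa [inv_mul_cancel₀ hsγ.ne'] at this
        have h3 : s^(γ-1) = s^γ/s := by rw [Real.rpow_sub hs0, Real.rpow_one]
        rw [h3]
        have h4 : (1 + γ*((1-s)/s)) * s^γ = s^γ + γ * (s^γ/s) * (1-s) := by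
          field_simp
        rw [h4] at h2; linarith
      have hden : 0 < γ*s*(1-s) := by
        apply mul_pos (mul_pos hγ0 hs0); linarith
      have hqq : q = (1-s^γ)/(γ*s*(1-s)) := by
        rw [hqdef, ← neg_div_neg_eq]; congr 1 <;> ring
      have h5 : s^(γ-2) ≤ q := by
        rw [hqq, le_div_iff₀ hden]
        have h6 : s^(γ-1) = s^(γ-2) * s := by
          rw [show γ-1 = (γ-2)+1 by ring, Real.rpow_add hs0, Real.rpow_one]
        calc s^(γ-2) * (γ*s*(1-s)) = γ * (s^(γ-2)*s) * (1-s) := by ring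
          _ = γ * s^(γ-1) * (1-s) := by rw [h6]
          _ ≤ 1 - s^γ := key
      have h7 : (1:ℝ) ≤ s^(γ-2) :=
        Real.one_le_rpow_of_pos_of_le_one_of_nonpos hs0 hlt.le (by linarith)
      have h8 : C^(-γ) ≤ 1 := Real.rpow_le_one_of_one_le_of_nonpos hC.le (by linarith)
      linarith
    · -- 1 < s
      have hb := one_add_mul_self_le_rpow_one_add (s := s-1) (by linarith) hγ1.le
      rw [show (1:ℝ) + (s-1) = s by ring] at hb
      have hden : 0 < γ*s*(s-1) := by
        apply mul_pos (mul_pos hγ0 hs0); linarith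
      have hq1 : 1/s ≤ q := by
        rw [hqdef, div_le_div_iff₀ hs0 hden]
        nlinarith
      have h8 : C^(-γ) ≤ 1/C := by
        have := Real.rpow_le_rpow_of_exponent_le hC.le (show -γ ≤ -1 by linarith)
        rwa [Real.rpow_neg_one, ← one_div] at this
      have h9 : 1/C ≤ 1/s := one_div_le_one_div_of_le hs0 hs2
      linarith
  have hq0 : 0 < q := lt_of_lt_of_le (Real.rpow_pos_of_pos hC0 _) hq
  set a : ℝ := Real.sqrt q with hadef
  have ha : C^(-(γ/2)) ≤ a := by
    have h1 : C^(-(γ/2)) = Real.sqrt (C^(-γ)) := by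
      rw [Real.sqrt_eq_rpow, ← Real.rpow_mul hC0.le]
      congr 1; ring
    rw [h1, hadef]
    exact Real.sqrt_le_sqrt hq
  have ha0 : 0 < a := lt_of_lt_of_le (Real.rpow_pos_of_pos hC0 _) ha
  have haq : a^2 = q := Real.sq_sqrt hq0.le
  set b : ℝ := (s^θ - 1)/(θ*(s-1)) with hbdef
  have hb0 : 0 ≤ b := by
    rcases lt_or_gt_of_ne hne with hlt | hgt
    · have h1 : s^θ < 1 := by
        have := Real.rpow_lt_rpow hs0.le hlt hθ0
        rwa [Real.one_rpow] at this
      have h2 : θ*(s-1) < 0 := mul_neg_of_pos_of_neg hθ0 (by linarith)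
      exact le_of_lt (div_pos_of_neg_of_neg (by linarith) h2)
    · have h1 : 1 < s^θ := by
        have := Real.rpow_lt_rpow (by norm_num) hgt hθ0
        rwa [Real.one_rpow] at this
      exact le_of_lt (div_pos (by linarith) (mul_pos hθ0 (by linarith)))
  have habpos : 0 < a + b := by linarith
  -- the expression equals (s-1)*(a-b)
  have hGb : a * (s-1) - (s^θ - 1)/θ = (s-1) * (a - b) := by
    have h1 : (s^θ - 1)/θ = (s-1) * b := by
      rw [hbdef]; field_simp
    rw [h1]; ring
  -- N identity
  have hP1 : s^(θ+1) = s^θ * s := by rw [Real.rpow_add hs0, Real.rpow_one]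
  have hP2 : s^γ = s^θ * s^θ * s := by
    rw [hγ, show 2*θ+1 = θ+(θ+1) by ring, Real.rpow_add hs0, hP1]; ring
  have hP3 : s^(γ+1) = s^θ * s^θ * s * s := by
    rw [Real.rpow_add hs0, Real.rpow_one, hP2]
  have hqb : q - b^2 =
      (θ^2 * s^(γ+1) - (θ+1)^2 * s^γ + 2*γ*s^(θ+1) - (θ+1)^2*s + θ^2)
        / (γ*θ^2*s*(s-1)^2) := by
    rw [hqdef, hbdef, hP3, hP2, hP1, hγ]
    field_simp
    ring
  -- estimate |q - b^2|
  have hDpos : 0 < γ*θ^2*s*(s-1)^2 := by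
    have : (0:ℝ) < (s-1)^2 := by positivity
    positivity
  have hCs : 1 ≤ C * s := by
    rw [div_le_iff₀ hC0] at hs1; linarith
  have hstep : |q - b^2| ≤ (K*C/(γ*θ^2)) * |s-1|^2 := by
    rw [hqb, abs_div, abs_of_pos hDpos, div_le_iff₀ hDpos]
    have hrhs : (K*C/(γ*θ^2))*|s-1|^2 * (γ*θ^2*s*(s-1)^2) = K*C*s*(|s-1|^2*(s-1)^2) := by
      field_simp
    rw [hrhs, show (s-1)^2 = |s-1|^2 from (sq_abs _).symm]
    calc |θ^2 * s^(γ+1) - (θ+1)^2 * s^γ + 2*γ*s^(θ+1) - (θ+1)^2*s + θ^2|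
        ≤ K * |s-1|^4 := hN s hs1 hs2
      _ ≤ K*C*s*(|s-1|^2*|s-1|^2) := by
          have h4 : |s-1|^2*|s-1|^2 = |s-1|^4 := by ring
          rw [h4]
          calc K*|s-1|^4 = K*|s-1|^4*1 := by ring
            _ ≤ K*|s-1|^4*(C*s) := by
                apply mul_le_mul_of_nonneg_left hCs
                positivity
            _ = K*C*s*|s-1|^4 := by ring
  -- combine
  have hcc : C^(γ/2) * C^(-(γ/2)) = 1 := by
    rw [← Real.rpow_add hC0]; norm_num
  have hCg : 0 < C^(γ/2) := Real.rpow_pos_of_pos hC0 _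
  have hstep2 : |a - b| ≤ C^(γ/2) * ((K*C/(γ*θ^2)) * |s-1|^2) := by
    have h2 : a - b = (q - b^2)/(a+b) := by
      rw [eq_div_iff habpos.ne', ← haq]; ring
    have h3 : C^(-(γ/2)) ≤ a + b := by linarith
    have h4 : 0 ≤ (K*C/(γ*θ^2)) * |s-1|^2 := by positivity
    rw [h2, abs_div, abs_of_pos habpos, div_le_iff₀ habpos]
    calc |q - b^2| ≤ (K*C/(γ*θ^2)) * |s-1|^2 := hstep
      _ = (K*C/(γ*θ^2))*|s-1|^2 * (C^(γ/2) * C^(-(γ/2))) := by rw [hcc]; ring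
      _ ≤ (K*C/(γ*θ^2))*|s-1|^2 * (C^(γ/2) * (a+b)) := by
          apply mul_le_mul_of_nonneg_left _ h4
          exact mul_le_mul_of_nonneg_left h3 hCg.le
      _ = C^(γ/2)*((K*C/(γ*θ^2))*|s-1|^2)*(a+b) := by ring
  calc |Real.sqrt q * (s-1) - (s^θ - 1)/θ|
      = |(s-1) * (a - b)| := by rw [← hadef, hGb]
    _ = |s-1| * |a - b| := abs_mul _ _
    _ ≤ |s-1| * (C^(γ/2) * ((K*C/(γ*θ^2)) * |s-1|^2)) :=
        mul_le_mul_of_nonneg_left hstep2 (abs_nonneg _)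
    _ = C^(γ/2) * (K*C/(γ*θ^2)) * |s-1|^3 := by ring

/-- Along the 2-shock curve `S₂` through `(ρ₀,v₀)`, the Riemann
invariant `z = v − ρ^θ/θ` differs from `z₀` by `O(1)·ρ₀^{(γ−7)/2}·|ρ−ρ₀|³`
uniformly for `1/C ≤ ρ/ρ₀ ≤ C`: second-order tangency of `S₂` and `R₂`. -/
theorem stmt_10 (γ θ : ℝ) (hγ1 : 1 < γ) (hγ2 : γ ≤ 5 / 3) (hθ : θ = (γ - 1) / 2)
    (C : ℝ) (hC : 1 < C) :
    ∃ A : ℝ, 0 < A ∧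
      ∀ ρ₀ ρ v₀ : ℝ, 0 < ρ₀ → 0 < ρ → 1 / C ≤ ρ / ρ₀ → ρ / ρ₀ ≤ C → ρ ≠ ρ₀ →
        |(v₀ + Real.sqrt ((ρ ^ γ / γ - ρ₀ ^ γ / γ) / (ρ * ρ₀ * (ρ - ρ₀))) * (ρ - ρ₀)
            - ρ ^ θ / θ)
          - (v₀ - ρ₀ ^ θ / θ)|
        ≤ A * ρ₀ ^ ((γ - 7) / 2) * |ρ - ρ₀| ^ 3 := by
  obtain ⟨A, hA, hG⟩ := shock_G_bound γ θ C hγ1 hγ2 hθ (by linarith)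
  have hθ0 : 0 < θ := by rw [hθ]; linarith
  have hγ0 : 0 < γ := by linarith
  refine ⟨A, hA, fun ρ₀ ρ v₀ h0 hρ hs1 hs2 hne => ?_⟩
  obtain ⟨s, rfl⟩ : ∃ s, ρ = ρ₀ * s := ⟨ρ/ρ₀, by field_simp⟩
  rw [mul_div_cancel_left₀ _ h0.ne'] at hs1 hs2
  have hs0 : 0 < s := by
    have := div_pos hρ h0
    rwa [mul_div_cancel_left₀ _ h0.ne'] at this
  have hsne : s ≠ 1 := by
    intro h; apply hne; rw [h, mul_one]
  have hs10 : s - 1 ≠ 0 := sub_ne_zero.mpr hsne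
  have hdiff : ρ₀ * s - ρ₀ = ρ₀ * (s - 1) := by ring
  have hρ₀γ : (0:ℝ) < ρ₀^γ := Real.rpow_pos_of_pos h0 _
  have harg : ((ρ₀*s)^γ/γ - ρ₀^γ/γ)/((ρ₀*s)*ρ₀*(ρ₀*s-ρ₀)) = ρ₀^(γ-3) * ((s^γ-1)/(γ*s*(s-1))) := by
    have hrg : (ρ₀*s)^γ = ρ₀^γ * s^γ := Real.mul_rpow h0.le hs0.le
    have h3 : ρ₀^((3:ℕ):ℝ) = ρ₀*(ρ₀*ρ₀) := by rw [Real.rpow_natCast]; ring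
    rw [hrg, hdiff, Real.rpow_sub h0, show (3:ℝ) = ((3:ℕ):ℝ) by norm_num, h3]
    field_simp [hs10]
  have hsqrt : Real.sqrt (((ρ₀*s)^γ/γ - ρ₀^γ/γ)/((ρ₀*s)*ρ₀*(ρ₀*s-ρ₀)))
      = ρ₀^((γ-3)/2) * Real.sqrt ((s^γ-1)/(γ*s*(s-1))) := by
    rw [harg, Real.sqrt_mul (Real.rpow_nonneg h0.le _)]
    congr 1
    rw [Real.sqrt_eq_rpow, ← Real.rpow_mul h0.le]
    congr 1; ring
  have hθexp : ρ₀^((γ-3)/2) * ρ₀ = ρ₀^θ := by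
    have h1 := Real.rpow_add h0 ((γ-3)/2) 1
    rw [Real.rpow_one] at h1
    rw [← h1]; congr 1; rw [hθ]; ring
  have hρθ : (ρ₀*s)^θ = ρ₀^θ * s^θ := Real.mul_rpow h0.le hs0.le
  have hkey : (v₀ + Real.sqrt (((ρ₀*s) ^ γ / γ - ρ₀ ^ γ / γ) / ((ρ₀*s) * ρ₀ * (ρ₀*s - ρ₀))) * (ρ₀*s - ρ₀)
            - (ρ₀*s) ^ θ / θ) - (v₀ - ρ₀ ^ θ / θ)
      = ρ₀^θ * (Real.sqrt ((s^γ-1)/(γ*s*(s-1))) * (s-1) - (s^θ-1)/θ) := by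
    rw [hsqrt, hρθ, hdiff, ← hθexp]
    field_simp
    ring
  have h73 : ρ₀^((γ-7)/2) * ρ₀^(3:ℕ) = ρ₀^θ := by
    rw [← Real.rpow_natCast ρ₀ 3, ← Real.rpow_add h0]
    congr 1; rw [hθ]; push_cast; ring
  have hρ₀θ : (0:ℝ) ≤ ρ₀^θ := Real.rpow_nonneg h0.le _
  rw [hkey, abs_mul, abs_of_nonneg hρ₀θ, hdiff, abs_mul, abs_of_pos h0]
  calc ρ₀^θ * |Real.sqrt ((s^γ-1)/(γ*s*(s-1))) * (s-1) - (s^θ-1)/θ|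
      ≤ ρ₀^θ * (A * |s-1|^3) :=
        mul_le_mul_of_nonneg_left (hG s hs1 hs2 hsne) hρ₀θ
    _ = A * (ρ₀^((γ-7)/2) * ρ₀^(3:ℕ)) * |s-1|^3 := by rw [h73]; ring
    _ = A * ρ₀^((γ-7)/2) * (ρ₀ * |s-1|)^3 := by ring
end

section
/- Let θ ∈ (0,1], K > 0, M ≥ L ≥ 1 + K, T > 0, and let F : [0,1]×[0,T] → ℝ be continuous with |F(x,t)| ≤ K. Suppose z, w : [0,1]×[0,T] → ℝ are continuously differentiable, satisfy z(x,t) ≤ w(x,t) everywhere, and solve the diagonal system ∂_t z + λ1·∂_x z = F(x,t), ∂_t w + λ2·∂_x w = F(x,t), where λ1 = ((1+θ)/2)·z + ((1−θ)/2)·w and λ2 = ((1−θ)/2)·z + ((1+θ)/2)·w. Assume the initial bounds z(x,0) ≥ L − Kx and w(x,0) ≤ M + Kx for all x ∈ [0,1], and the boundary bounds z(0,t) ≥ L and w(0,t) ≤ M for all t ∈ [0,T]. Then for all (x,t) ∈ [0,1]×[0,T]: z(x,t) ≥ L − Kx and w(x,t) ≤ M + Kx. -/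
open Set Filter Topology

set_option maxHeartbeats 1000000

private lemma deriv_le_zero_aux {f : ℝ → ℝ} {f' c l : ℝ} (hl : l < c)
    (hf : HasDerivAt f f' c) (hmin : ∀ y ∈ Icc l c, f c ≤ f y) : f' ≤ 0 := by
  have hs : Tendsto (slope f c) (𝓝[≠] c) (𝓝 f') := hasDerivAt_iff_tendsto_slope.mp hf
  have hsub : Ioo l c ⊆ {c}ᶜ := fun y hy => ne_of_lt hy.2
  have hne : (𝓝[Ioo l c] c).NeBot := by
    rw [← mem_closure_iff_nhdsWithin_neBot, closure_Ioo hl.ne]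
    exact right_mem_Icc.mpr hl.le
  refine le_of_tendsto (hs.mono_left (nhdsWithin_mono _ hsub)) ?_
  filter_upwards [self_mem_nhdsWithin] with y hy
  rw [slope_def_field]
  refine div_nonpos_iff.mpr (Or.inl ⟨?_, ?_⟩)
  · have := hmin y ⟨hy.1.le, hy.2.le⟩; linarith
  · linarith [hy.2]

private lemma nonneg_at_right_endpoint {φ : ℝ → ℝ} {u c : ℝ} (huc : u < c)
    (hφ : ContinuousWithinAt φ (Icc u c) c) (h0 : ∀ y ∈ Ico u c, 0 ≤ φ y) : 0 ≤ φ c := by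
  have hne : (𝓝[Ico u c] c).NeBot := by
    rw [← mem_closure_iff_nhdsWithin_neBot, closure_Ico huc.ne]
    exact right_mem_Icc.mpr huc.le
  exact ge_of_tendsto (hφ.tendsto.mono_left (nhdsWithin_mono _ Ico_subset_Icc_self))
    (by filter_upwards [self_mem_nhdsWithin] using h0)


/-- Maximum principle / generalized invariant region for the
diagonal system in Riemann invariant coordinates: if C¹ functions `z ≤ w`
solve `z_t + λ₁ z_x = F`, `w_t + λ₂ w_x = F` on `[0,1]×[0,T]` with
`λ₁ = ((1+θ)/2)z + ((1−θ)/2)w`, `λ₂ = ((1−θ)/2)z + ((1+θ)/2)w`, `|F| ≤ K`,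
and the initial bounds `z(·,0) ≥ L − Kx`, `w(·,0) ≤ M + Kx` and boundary bounds
`z(0,·) ≥ L`, `w(0,·) ≤ M` hold, then `z ≥ L − Kx` and `w ≤ M + Kx`
everywhere. -/
theorem stmt_15 (θ K L M T : ℝ) (hθ0 : 0 < θ) (hθ1 : θ ≤ 1) (hK : 0 < K)
    (hLM : L ≤ M) (hL : 1 + K ≤ L) (hT : 0 < T)
    (F z w : ℝ → ℝ → ℝ)
    (hF : ContinuousOn (fun p : ℝ × ℝ => F p.1 p.2) (Icc 0 1 ×ˢ Icc 0 T))
    (hFK : ∀ x ∈ Icc (0 : ℝ) 1, ∀ t ∈ Icc (0 : ℝ) T, |F x t| ≤ K)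
    (hz : ContDiffOn ℝ 1 (fun p : ℝ × ℝ => z p.1 p.2) (Icc 0 1 ×ˢ Icc 0 T))
    (hw : ContDiffOn ℝ 1 (fun p : ℝ × ℝ => w p.1 p.2) (Icc 0 1 ×ˢ Icc 0 T))
    (hzw : ∀ x ∈ Icc (0 : ℝ) 1, ∀ t ∈ Icc (0 : ℝ) T, z x t ≤ w x t)
    (hzeq : ∀ x ∈ Icc (0 : ℝ) 1, ∀ t ∈ Icc (0 : ℝ) T,
      deriv (fun s => z x s) t
        + ((1 + θ) / 2 * z x t + (1 - θ) / 2 * w x t) * deriv (fun y => z y t) x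
        = F x t)
    (hweq : ∀ x ∈ Icc (0 : ℝ) 1, ∀ t ∈ Icc (0 : ℝ) T,
      deriv (fun s => w x s) t
        + ((1 - θ) / 2 * z x t + (1 + θ) / 2 * w x t) * deriv (fun y => w y t) x
        = F x t)
    (hinit : ∀ x ∈ Icc (0 : ℝ) 1, L - K * x ≤ z x 0 ∧ w x 0 ≤ M + K * x)
    (hbdry : ∀ t ∈ Icc (0 : ℝ) T, L ≤ z 0 t ∧ w 0 t ≤ M) :
    ∀ x ∈ Icc (0 : ℝ) 1, ∀ t ∈ Icc (0 : ℝ) T,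
      L - K * x ≤ z x t ∧ w x t ≤ M + K * x := by
  set C : ℝ := K + 1 with hCdef
  have hC0 : 0 < C := by simp only [hCdef]; linarith
  have hzc : ContinuousOn (fun p : ℝ × ℝ => z p.1 p.2) (Icc 0 1 ×ˢ Icc 0 T) := hz.continuousOn
  have hwc : ContinuousOn (fun p : ℝ × ℝ => w p.1 p.2) (Icc 0 1 ×ˢ Icc 0 T) := hw.continuousOn
  have hzd : DifferentiableOn ℝ (fun p : ℝ × ℝ => z p.1 p.2) (Icc 0 1 ×ˢ Icc 0 T) :=
    hz.differentiableOn one_ne_zero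
  have hwd : DifferentiableOn ℝ (fun p : ℝ × ℝ => w p.1 p.2) (Icc 0 1 ×ˢ Icc 0 T) :=
    hw.differentiableOn one_ne_zero
  -- differentiability of sections at interior points
  have hdiff : ∀ x0 t0 : ℝ, 0 < x0 → x0 < 1 → 0 < t0 → t0 < T →
      DifferentiableAt ℝ (fun s => z x0 s) t0 ∧ DifferentiableAt ℝ (fun y => z y t0) x0 ∧
      DifferentiableAt ℝ (fun s => w x0 s) t0 ∧ DifferentiableAt ℝ (fun y => w y t0) x0 := by
    intro x0 t0 h1 h2 h3 h4
    have hmem : (Icc (0:ℝ) 1 ×ˢ Icc (0:ℝ) T) ∈ 𝓝 ((x0, t0) : ℝ × ℝ) :=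
      prod_mem_nhds (Icc_mem_nhds h1 h2) (Icc_mem_nhds h3 h4)
    have hzA : DifferentiableAt ℝ (fun p : ℝ × ℝ => z p.1 p.2) (x0, t0) :=
      (hzd (x0, t0) (mem_of_mem_nhds hmem)).differentiableAt hmem
    have hwA : DifferentiableAt ℝ (fun p : ℝ × ℝ => w p.1 p.2) (x0, t0) :=
      (hwd (x0, t0) (mem_of_mem_nhds hmem)).differentiableAt hmem
    have hl1 : DifferentiableAt ℝ (fun s : ℝ => ((x0, s) : ℝ × ℝ)) t0 :=
      (differentiableAt_const x0).prodMk differentiableAt_id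
    have hl2 : DifferentiableAt ℝ (fun y : ℝ => ((y, t0) : ℝ × ℝ)) x0 :=
      differentiableAt_id.prodMk (differentiableAt_const t0)
    exact ⟨(hzA.comp t0 hl1 : _), (by have h := hzA.comp x0 hl2; exact h),
      (hwA.comp t0 hl1 : _), (by have h := hwA.comp x0 hl2; exact h)⟩
  -- KEY interior lemma with exponential barrier
  have key : ∀ a b ε : ℝ, 0 < a → a < 1 → 0 < b → b < T → 0 < ε →
      ε * Real.exp (C * b) ≤ 1 →
      ∀ x ∈ Icc 0 a, ∀ t ∈ Icc 0 b,
        L - K * x - ε * Real.exp (C * t) ≤ z x t ∧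
        w x t ≤ M + K * x + ε * Real.exp (C * t) := by
    intro a b ε ha0 ha1 hb0 hbT hε hεb
    set g : ℝ × ℝ → ℝ := fun p =>
      min (z p.1 p.2 - (L - K * p.1 - ε * Real.exp (C * p.2)))
          (M + K * p.1 + ε * Real.exp (C * p.2) - w p.1 p.2) with hgdef
    suffices hsuff : ∀ p ∈ (Icc (0:ℝ) a ×ˢ Icc (0:ℝ) b), 0 ≤ g p by
      intro x hx t ht
      have h := hsuff (x, t) ⟨hx, ht⟩
      simp only [hgdef, le_min_iff] at h
      exact ⟨by linarith [h.1], by linarith [h.2]⟩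
    by_contra hcon
    push_neg at hcon
    obtain ⟨p0, hp0R, hp0⟩ := hcon
    have hsub : (Icc (0:ℝ) a ×ˢ Icc (0:ℝ) b) ⊆ Icc 0 1 ×ˢ Icc 0 T :=
      prod_mono (Icc_subset_Icc le_rfl ha1.le) (Icc_subset_Icc le_rfl hbT.le)
    have hbar1 : Continuous fun p : ℝ × ℝ => L - K * p.1 - ε * Real.exp (C * p.2) := by fun_prop
    have hbar2 : Continuous fun p : ℝ × ℝ => M + K * p.1 + ε * Real.exp (C * p.2) := by fun_prop
    have hgc : ContinuousOn g (Icc 0 a ×ˢ Icc 0 b) := fun p hp =>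
      (((hzc.mono hsub).sub hbar1.continuousOn) p hp).min
        ((hbar2.continuousOn.sub (hwc.mono hsub)) p hp)
    have hRcomp : IsCompact (Icc (0:ℝ) a ×ˢ Icc (0:ℝ) b) := isCompact_Icc.prod isCompact_Icc
    have hAcl : IsClosed ((Icc (0:ℝ) a ×ˢ Icc (0:ℝ) b) ∩ g ⁻¹' Iic 0) :=
      hgc.preimage_isClosed_of_isClosed (isClosed_Icc.prod isClosed_Icc) isClosed_Iic
    have hAcp : IsCompact ((Icc (0:ℝ) a ×ˢ Icc (0:ℝ) b) ∩ g ⁻¹' Iic 0) :=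
      hRcomp.of_isClosed_subset hAcl inter_subset_left
    obtain ⟨q, hqA, hqmin⟩ := hAcp.exists_isMinOn ⟨p0, hp0R, mem_preimage.mpr hp0.le⟩
      continuous_snd.continuousOn
    obtain ⟨x0, t0⟩ := q
    obtain ⟨⟨hqx', hqt'⟩, hq0'⟩ := hqA
    have hqx : x0 ∈ Icc (0:ℝ) a := hqx'
    have hqt : t0 ∈ Icc (0:ℝ) b := hqt'
    have hq0 : g (x0, t0) ≤ 0 := hq0'
    have hx01 : x0 ∈ Icc (0:ℝ) 1 := Icc_subset_Icc le_rfl ha1.le hqx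
    have ht0T : t0 ∈ Icc (0:ℝ) T := Icc_subset_Icc le_rfl hbT.le hqt
    have hexp_pos : ∀ s : ℝ, 0 < ε * Real.exp (C * s) := fun s => by positivity
    -- t0 > 0
    have ht0pos : 0 < t0 := by
      rcases hqt.1.lt_or_eq with h | h
      · exact h
      · exfalso
        have h1 := (hinit x0 hx01).1
        have h2 := (hinit x0 hx01).2
        have hgpos : 0 < g (x0, 0) := by
          simp only [hgdef, lt_min_iff]
          exact ⟨by linarith [hexp_pos 0], by linarith [hexp_pos 0]⟩
        rw [← h] at hq0
        linarith
    -- strict positivity below t0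
    have hgt : ∀ p, p ∈ (Icc (0:ℝ) a ×ˢ Icc (0:ℝ) b) → p.2 < t0 → 0 < g p := by
      intro p hp hlt
      by_contra hng
      push_neg at hng
      exact absurd (isMinOn_iff.mp hqmin p ⟨hp, mem_preimage.mpr hng⟩) (not_le.mpr hlt)
    -- nonnegativity up to t0
    have hclt0 : ∀ x ∈ Icc (0:ℝ) a, 0 ≤ g (x, t0) := by
      intro x hx
      have hcs : Continuous fun s : ℝ => ((x, s) : ℝ × ℝ) := by fun_prop
      have h1 : ContinuousOn (fun s => g (x, s)) (Icc 0 b) :=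
        hgc.comp hcs.continuousOn (fun s hs => ⟨hx, hs⟩)
      have h2 : ContinuousWithinAt (fun s => g (x, s)) (Icc 0 t0) t0 :=
        (h1.mono (Icc_subset_Icc le_rfl hqt.2)) t0 (right_mem_Icc.mpr hqt.1)
      exact nonneg_at_right_endpoint (φ := fun s => g (x, s)) ht0pos h2
        (fun y hy => (hgt (x, y) ⟨hx, ⟨hy.1, hy.2.le.trans hqt.2⟩⟩ hy.2).le)
    have hge0 : ∀ x ∈ Icc (0:ℝ) a, ∀ s ∈ Icc (0:ℝ) t0, 0 ≤ g (x, s) := by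
      intro x hx s hs
      rcases hs.2.lt_or_eq with h | h
      · exact (hgt (x, s) ⟨hx, ⟨hs.1, h.le.trans hqt.2⟩⟩ h).le
      · rw [h]; exact hclt0 x hx
    have hgq0 : g (x0, t0) = 0 := le_antisymm hq0 (hge0 x0 hqx t0 ⟨hqt.1, le_rfl⟩)
    -- components
    set E : ℝ := ε * Real.exp (C * t0) with hEdef
    have hE : 0 < E := hexp_pos t0
    have hE1 : E ≤ 1 := by
      have h1 : C * t0 ≤ C * b := mul_le_mul_of_nonneg_left hqt.2 hC0.le
      have h2 : Real.exp (C * t0) ≤ Real.exp (C * b) := Real.exp_le_exp.mpr h1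
      calc E ≤ ε * Real.exp (C * b) := mul_le_mul_of_nonneg_left h2 hε.le
        _ ≤ 1 := hεb
    have hmin0 : min (z x0 t0 - (L - K * x0 - E)) (M + K * x0 + E - w x0 t0) = 0 := hgq0
    have hA0 : 0 ≤ z x0 t0 - (L - K * x0 - E) := by
      have := min_le_left (z x0 t0 - (L - K * x0 - E)) (M + K * x0 + E - w x0 t0)
      linarith [hmin0 ▸ this]
    have hB0 : 0 ≤ M + K * x0 + E - w x0 t0 := by
      have := min_le_right (z x0 t0 - (L - K * x0 - E)) (M + K * x0 + E - w x0 t0)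
      linarith [hmin0 ▸ this]
    have hwz : z x0 t0 ≤ w x0 t0 := hzw x0 hx01 t0 ht0T
    have hKx0 : K * x0 ≤ K := by nlinarith [hqx.2, ha1.le, hqx.1]
    have hz1E : 1 - E ≤ z x0 t0 := by linarith
    have hx0lt1 : x0 < 1 := lt_of_le_of_lt hqx.2 ha1
    have ht0ltT : t0 < T := lt_of_le_of_lt hqt.2 hbT
    have hFb := hFK x0 hx01 t0 ht0T
    have hFlow : -K ≤ F x0 t0 := (abs_le.mp hFb).1
    have hFhigh : F x0 t0 ≤ K := (abs_le.mp hFb).2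
    rcases min_eq_iff.mp hmin0 with ⟨hAz, _⟩ | ⟨hBz, _⟩
    · -- z touches the barrier
      have hx0pos : 0 < x0 := by
        rcases hqx.1.lt_or_eq with h | h
        · exact h
        · exfalso
          have hb1 := (hbdry t0 ht0T).1
          rw [← h] at hAz
          have : K * (0:ℝ) = 0 := by ring
          nlinarith
      obtain ⟨hdzT, hdzX, -, -⟩ := hdiff x0 t0 hx0pos hx0lt1 ht0pos ht0ltT
      set zt := deriv (fun s => z x0 s) t0 with hztdef
      set zx := deriv (fun y => z y t0) x0 with hzxdef
      -- time derivative inequality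
      have hht : HasDerivAt (fun s => z x0 s - (L - K * x0 - ε * Real.exp (C * s)))
          (zt - -(ε * (Real.exp (C * t0) * (C * 1)))) t0 := by
        have h1 : HasDerivAt (fun s => z x0 s) zt t0 := hdzT.hasDerivAt
        have h2 : HasDerivAt (fun s : ℝ => C * s) (C * 1) t0 := (hasDerivAt_id t0).const_mul C
        have h3 : HasDerivAt (fun s => Real.exp (C * s)) (Real.exp (C * t0) * (C * 1)) t0 := h2.exp
        exact h1.sub ((h3.const_mul ε).const_sub (L - K * x0))
      have htd : zt - -(ε * (Real.exp (C * t0) * (C * 1))) ≤ 0 := by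
        refine deriv_le_zero_aux ht0pos hht ?_
        intro y hy
        have h0 := hge0 x0 hqx y ⟨hy.1, hy.2⟩
        simp only [hgdef, le_min_iff] at h0
        linarith [h0.1]
      have hzt_le : zt ≤ -(C * E) := by
        have he : ε * (Real.exp (C * t0) * (C * 1)) = C * E := by rw [hEdef]; ring
        rw [he] at htd
        linarith
      -- space derivative inequality
      have hhx : HasDerivAt (fun y => z y t0 - (L - K * y - ε * Real.exp (C * t0)))
          (zx - -(K * 1)) x0 := by
        have h1 : HasDerivAt (fun y => z y t0) zx x0 := hdzX.hasDerivAt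
        have h2 : HasDerivAt (fun y : ℝ => K * y) (K * 1) x0 := (hasDerivAt_id x0).const_mul K
        exact h1.sub ((h2.const_sub L).sub_const (ε * Real.exp (C * t0)))
      have hxd : zx - -(K * 1) ≤ 0 := by
        refine deriv_le_zero_aux hx0pos hhx ?_
        intro y hy
        have h0 := hge0 y ⟨hy.1, hy.2.trans hqx.2⟩ t0 ⟨ht0pos.le, le_rfl⟩
        simp only [hgdef, le_min_iff] at h0
        linarith [h0.1]
      have hzx_le : zx ≤ -K := by linarith
      -- PDE
      have hpde := hzeq x0 hx01 t0 ht0T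
      rw [← hztdef, ← hzxdef] at hpde
      set lam := (1 + θ) / 2 * z x0 t0 + (1 - θ) / 2 * w x0 t0 with hlamdef
      have hlam_ge : 1 - E ≤ lam := by
        rw [hlamdef]
        nlinarith [mul_nonneg (by linarith : (0:ℝ) ≤ 1 - θ)
          (by linarith : (0:ℝ) ≤ w x0 t0 - z x0 t0), hz1E]
      have hlam0 : 0 ≤ lam := by linarith
      have hprod : lam * K ≤ -(lam * zx) := by
        have := mul_le_mul_of_nonneg_left (by linarith : K ≤ -zx) hlam0
        linarith [this, (by ring : lam * -zx = -(lam * zx))]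
      have hprod2 : K - E * K ≤ lam * K := by nlinarith [hlam_ge, hK.le]
      -- contradiction: zt ≥ -E*K but zt ≤ -(K+1)E
      have h1 : zt = F x0 t0 - lam * zx := by linarith
      have h2 : -(E * K) ≤ zt := by linarith
      have h3 : zt ≤ -((K + 1) * E) := by
        have he : C * E = (K + 1) * E := by rw [hCdef]
        rw [he] at hzt_le
        linarith
      nlinarith
    · -- w touches the barrier
      have hx0pos : 0 < x0 := by
        rcases hqx.1.lt_or_eq with h | h
        · exact h
        · exfalso
          have hb2 := (hbdry t0 ht0T).2
          rw [← h] at hBz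
          nlinarith
      obtain ⟨-, -, hdwT, hdwX⟩ := hdiff x0 t0 hx0pos hx0lt1 ht0pos ht0ltT
      set wt := deriv (fun s => w x0 s) t0 with hwtdef
      set wx := deriv (fun y => w y t0) x0 with hwxdef
      -- time derivative inequality
      have hht : HasDerivAt (fun s => M + K * x0 + ε * Real.exp (C * s) - w x0 s)
          (0 + ε * (Real.exp (C * t0) * (C * 1)) - wt) t0 := by
        have h1 : HasDerivAt (fun s => w x0 s) wt t0 := hdwT.hasDerivAt
        have h2 : HasDerivAt (fun s : ℝ => C * s) (C * 1) t0 := (hasDerivAt_id t0).const_mul C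
        have h3 : HasDerivAt (fun s => Real.exp (C * s)) (Real.exp (C * t0) * (C * 1)) t0 := h2.exp
        exact (((hasDerivAt_const t0 (M + K * x0)).add (h3.const_mul ε)).sub h1)
      have htd : 0 + ε * (Real.exp (C * t0) * (C * 1)) - wt ≤ 0 := by
        refine deriv_le_zero_aux ht0pos hht ?_
        intro y hy
        have h0 := hge0 x0 hqx y ⟨hy.1, hy.2⟩
        simp only [hgdef, le_min_iff] at h0
        linarith [h0.2]
      have hwt_ge : C * E ≤ wt := by
        have he : ε * (Real.exp (C * t0) * (C * 1)) = C * E := by rw [hEdef]; ring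
        rw [he] at htd
        linarith
      -- space derivative inequality
      have hhx : HasDerivAt (fun y => M + K * y + ε * Real.exp (C * t0) - w y t0)
          (0 + K * 1 - wx) x0 := by
        have h1 : HasDerivAt (fun y => w y t0) wx x0 := hdwX.hasDerivAt
        have h2 : HasDerivAt (fun y : ℝ => K * y) (K * 1) x0 := (hasDerivAt_id x0).const_mul K
        exact (((hasDerivAt_const x0 M).add h2).add_const (ε * Real.exp (C * t0))).sub h1
      have hxd : 0 + K * 1 - wx ≤ 0 := by
        refine deriv_le_zero_aux hx0pos hhx ?_
        intro y hy
        have h0 := hge0 y ⟨hy.1, hy.2.trans hqx.2⟩ t0 ⟨ht0pos.le, le_rfl⟩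
        simp only [hgdef, le_min_iff] at h0
        linarith [h0.2]
      have hwx_ge : K ≤ wx := by linarith
      -- PDE
      have hpde := hweq x0 hx01 t0 ht0T
      rw [← hwtdef, ← hwxdef] at hpde
      set lam := (1 - θ) / 2 * z x0 t0 + (1 + θ) / 2 * w x0 t0 with hlamdef
      have hlam_ge : 1 - E ≤ lam := by
        rw [hlamdef]
        nlinarith [mul_nonneg (by linarith : (0:ℝ) ≤ 1 + θ)
          (by linarith : (0:ℝ) ≤ w x0 t0 - z x0 t0), hz1E]
      have hlam0 : 0 ≤ lam := by linarith
      have hprod : lam * K ≤ lam * wx := mul_le_mul_of_nonneg_left hwx_ge hlam0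
      have hprod2 : K - E * K ≤ lam * K := by nlinarith [hlam_ge, hK.le]
      have h1 : wt = F x0 t0 - lam * wx := by linarith
      have h2 : wt ≤ E * K := by linarith
      have h3 : (K + 1) * E ≤ wt := by
        have he : C * E = (K + 1) * E := by rw [hCdef]
        rw [he] at hwt_ge
        linarith
      nlinarith
  -- Step 1: strict interior
  have step1 : ∀ x, 0 ≤ x → x < 1 → ∀ t, 0 ≤ t → t < T →
      L - K * x ≤ z x t ∧ w x t ≤ M + K * x := by
    intro x hx0 hx1 t ht0 htT
    have main : ∀ δ : ℝ, 0 < δ → L - K * x - δ ≤ z x t ∧ w x t ≤ M + K * x + δ := by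
      intro δ hδ
      set a : ℝ := (x + 1) / 2 with hadef
      set b : ℝ := (t + T) / 2 with hbdef
      set ε : ℝ := min δ 1 * Real.exp (-(C * b)) with hεdef
      have hmδ : 0 < min δ 1 := lt_min hδ one_pos
      have hεpos : 0 < ε := mul_pos hmδ (Real.exp_pos _)
      have hεb : ε * Real.exp (C * b) = min δ 1 := by
        rw [hεdef, Real.exp_neg, mul_assoc, inv_mul_cancel₀ (Real.exp_ne_zero _), mul_one]
      have hxa : x ≤ a := by rw [hadef]; linarith
      have htb : t ≤ b := by rw [hbdef]; linarith
      have h := key a b ε (by rw [hadef]; linarith) (by rw [hadef]; linarith)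
        (by rw [hbdef]; linarith) (by rw [hbdef]; linarith) hεpos
        (by rw [hεb]; exact min_le_right _ _) x ⟨hx0, hxa⟩ t ⟨ht0, htb⟩
      have hbound : ε * Real.exp (C * t) ≤ δ := by
        have h1 : C * t ≤ C * b := mul_le_mul_of_nonneg_left htb hC0.le
        have h2 : Real.exp (C * t) ≤ Real.exp (C * b) := Real.exp_le_exp.mpr h1
        calc ε * Real.exp (C * t) ≤ ε * Real.exp (C * b) :=
              mul_le_mul_of_nonneg_left h2 hεpos.le
          _ = min δ 1 := hεb
          _ ≤ δ := min_le_left _ _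
      exact ⟨by linarith [h.1], by linarith [h.2]⟩
    constructor
    · refine le_of_forall_pos_le_add fun δ hδ => ?_
      linarith [(main δ hδ).1]
    · refine le_of_forall_pos_le_add fun δ hδ => ?_
      linarith [(main δ hδ).2]
  -- Step 2: extend to x = 1 (t < T)
  have step2 : ∀ x ∈ Icc (0:ℝ) 1, ∀ t, 0 ≤ t → t < T →
      L - K * x ≤ z x t ∧ w x t ≤ M + K * x := by
    intro x hx t ht0 htT
    rcases hx.2.lt_or_eq with h | h
    · exact step1 x hx.1 h t ht0 htT
    · subst h
      have htT' : t ∈ Icc (0:ℝ) T := ⟨ht0, htT.le⟩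
      have hcz : ContinuousOn (fun y => z y t) (Icc 0 1) :=
        hzc.comp (Continuous.continuousOn (by fun_prop : Continuous fun y : ℝ => ((y, t) : ℝ × ℝ)))
          (fun y hy => ⟨hy, htT'⟩)
      have hcw : ContinuousOn (fun y => w y t) (Icc 0 1) :=
        hwc.comp (Continuous.continuousOn (by fun_prop : Continuous fun y : ℝ => ((y, t) : ℝ × ℝ)))
          (fun y hy => ⟨hy, htT'⟩)
      constructor
      · have h0 : 0 ≤ z 1 t - (L - K * 1) :=
          nonneg_at_right_endpoint (φ := fun y : ℝ => z y t - (L - K * y)) one_pos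
            (((hcz.sub (by fun_prop : Continuous fun y : ℝ => L - K * y).continuousOn)) 1
              (right_mem_Icc.mpr zero_le_one))
            (fun y hy => by
              have := (step1 y hy.1 hy.2 t ht0 htT).1
              show 0 ≤ z y t - (L - K * y)
              linarith)
        linarith
      · have h0 : 0 ≤ M + K * 1 - w 1 t :=
          nonneg_at_right_endpoint (φ := fun y : ℝ => M + K * y - w y t) one_pos
            ((((by fun_prop : Continuous fun y : ℝ => M + K * y).continuousOn.sub hcw)) 1
              (right_mem_Icc.mpr zero_le_one))
            (fun y hy => by
              have := (step1 y hy.1 hy.2 t ht0 htT).2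
              show 0 ≤ M + K * y - w y t
              linarith)
        linarith
  -- Step 3: extend to t = T
  intro x hx t ht
  rcases ht.2.lt_or_eq with h | h
  · exact step2 x hx t ht.1 h
  · have hcz : ContinuousOn (fun s => z x s) (Icc 0 T) :=
      hzc.comp (Continuous.continuousOn (by fun_prop : Continuous fun s : ℝ => ((x, s) : ℝ × ℝ)))
        (fun s hs => ⟨hx, hs⟩)
    have hcw : ContinuousOn (fun s => w x s) (Icc 0 T) :=
      hwc.comp (Continuous.continuousOn (by fun_prop : Continuous fun s : ℝ => ((x, s) : ℝ × ℝ)))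
        (fun s hs => ⟨hx, hs⟩)
    rw [h]
    constructor
    · have h0 : 0 ≤ z x T - (L - K * x) :=
        nonneg_at_right_endpoint (φ := fun s : ℝ => z x s - (L - K * x)) hT
          ((hcz.sub continuousOn_const) T (right_mem_Icc.mpr hT.le))
          (fun s hs => by
            have := (step2 x hx s hs.1 hs.2).1
            show 0 ≤ z x s - (L - K * x)
            linarith)
      linarith
    · have h0 : 0 ≤ M + K * x - w x T :=
        nonneg_at_right_endpoint (φ := fun s : ℝ => M + K * x - w x s) hT
          ((continuousOn_const.sub hcw) T (right_mem_Icc.mpr hT.le))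
          (fun s hs => by
            have := (step2 x hx s hs.1 hs.2).2
            show 0 ≤ M + K * x - w x s
            linarith)
      linarith
end
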